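/- arXiv:2011.12218 — 9 statements merged into one kernel-verified Lean document; each statement's English description precedes it below -/
import Mathlib

section
/- For any points x, y, z in ℝ² forming a triangle, the three closed disks D(x,y), D(y,z), D(x,z) with diameters the sides of the triangle have a common point. (In particular, the foot of the altitude from the vertex with the largest angle lies in all three disks.) -/
/-!
Let `q` be the point of the segment `[x, y]` nearest to `z`. It lies in `D(x, y)`, and the
variational inequality characterising the nearest point gives `⟪x - q, z - q⟫ ≤ 0` and
`⟪y - q, z - q⟫ ≤ 0`, i.e. `q` sees `xz` and `yz` under a non-acute angle; by Thales this
means `q ∈ D(x, z)` and `q ∈ D(y, z)`.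
-/

open Real EuclideanGeometry RealInnerProductSpace

/-- The closed disk with diameter segment `ab`. -/
def diskD (a b : EuclideanSpace ℝ (Fin 2)) : Set (EuclideanSpace ℝ (Fin 2)) :=
  Metric.closedBall (midpoint ℝ a b) (dist a b / 2)

section InnerProductSpace

variable {F : Type*} [NormedAddCommGroup F] [InnerProductSpace ℝ F]

theorem dist_midpoint_sq_eq_add_inner (a b q : F) :
    dist q (midpoint ℝ a b) ^ 2 = (dist a b / 2) ^ 2 + ⟪a - q, b - q⟫ := by
  set u := a - q
  set v := b - q
  have hm : q - midpoint ℝ a b = -(2⁻¹ : ℝ) • (u + v) := by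
    rw [midpoint_eq_smul_add, invOf_eq_inv]; module
  have hab : a - b = u - v := (sub_sub_sub_cancel_right a b q).symm
  rw [dist_eq_norm, dist_eq_norm, hm, hab, norm_smul, mul_pow, div_pow, norm_add_sq_real u v,
    norm_sub_sq_real u v]
  norm_num
  ring

/-- Thales' theorem. -/
theorem mem_closedBall_midpoint_iff_inner_nonpos {a b q : F} :
    q ∈ Metric.closedBall (midpoint ℝ a b) (dist a b / 2) ↔ ⟪a - q, b - q⟫ ≤ 0 := by
  rw [Metric.mem_closedBall, ← sq_le_sq₀ dist_nonneg (by positivity),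
    dist_midpoint_sq_eq_add_inner]
  constructor <;> intro h <;> linarith

theorem segment_subset_closedBall_midpoint (a b : F) :
    segment ℝ a b ⊆ Metric.closedBall (midpoint ℝ a b) (dist a b / 2) := by
  have hrad : dist a (midpoint ℝ a b) = dist a b / 2 := by
    rw [dist_left_midpoint (𝕜 := ℝ)]; norm_num; ring
  refine (convex_closedBall _ _).segment_subset ?_ ?_
  · rw [Metric.mem_closedBall, hrad]
  · rw [Metric.mem_closedBall, ← dist_left_midpoint_eq_dist_right_midpoint, hrad]

theorem exists_mem_segment_inner_nonpos (a b c : F) :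
    ∃ q ∈ segment ℝ a b, ⟪a - q, c - q⟫ ≤ 0 ∧ ⟪b - q, c - q⟫ ≤ 0 := by
  have hconv : Convex ℝ (segment ℝ a b) := convex_segment a b
  have hcpt : IsCompact (segment ℝ a b) :=
    convexHull_pair (𝕜 := ℝ) a b ▸ (Set.toFinite {a, b}).isCompact_convexHull ℝ
  obtain ⟨q, hq, hmin⟩ := exists_norm_eq_iInf_of_complete_convex
    ⟨a, left_mem_segment ℝ a b⟩ hcpt.isComplete hconv c
  have hvar := (norm_eq_iInf_iff_real_inner_le_zero hconv hq).1 hmin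
  refine ⟨q, hq, ?_, ?_⟩
  · rw [real_inner_comm]; exact hvar a (left_mem_segment ℝ a b)
  · rw [real_inner_comm]; exact hvar b (right_mem_segment ℝ a b)

end InnerProductSpace

theorem triangle_side_disks_intersect_general
    (x y z : EuclideanSpace ℝ (Fin 2)) :
    ∃ q, q ∈ diskD x y ∧ q ∈ diskD y z ∧ q ∈ diskD x z := by
  obtain ⟨q, hq, hxz, hyz⟩ := exists_mem_segment_inner_nonpos x y z
  exact ⟨q, segment_subset_closedBall_midpoint x y hq,
    mem_closedBall_midpoint_iff_inner_nonpos.2 hyz, mem_closedBall_midpoint_iff_inner_nonpos.2 hxz⟩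

theorem triangle_side_disks_intersect
    (x y z : EuclideanSpace ℝ (Fin 2)) (h : AffineIndependent ℝ ![x, y, z]) :
    ∃ q, q ∈ diskD x y ∧ q ∈ diskD y z ∧ q ∈ diskD x z :=
  triangle_side_disks_intersect_general x y z
end

section
/- If e₁, e₂, e₃ are three segments in the plane that pairwise intersect, then the closed disks D(e₁), D(e₂), D(e₃) with these segments as diameters have a common point. -/
open Real
open scoped RealInnerProductSpace

section Aux

variable {F : Type*} [NormedAddCommGroup F] [InnerProductSpace ℝ F]

lemma key_real (α β γ s t : ℝ) (hα : 0 ≤ α) (hγ : 0 ≤ γ) (hcs : β * β ≤ α * γ) (hβ : 0 < β)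
    (hs : 0 ≤ s) (hs1 : s ≤ 1) (ht : 0 ≤ t) (ht1 : t ≤ 1) :
    0 < (1 - s) * (1 - t) * α + ((1 - s) * t + s * (1 - t)) * β + s * t * γ := by
  have hγ0 : 0 < γ := by nlinarith
  have h1 : 0 < (1 - s) * β + s * γ := by
    rcases eq_or_lt_of_le hs with hh | hh
    · rw [← hh]; linarith
    · nlinarith [mul_pos hh hγ0, mul_nonneg (sub_nonneg.2 hs1) hβ.le]
  have h2 : 0 < (1 - t) * β + t * γ := by
    rcases eq_or_lt_of_le ht with hh | hh
    · rw [← hh]; linarith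
    · nlinarith [mul_pos hh hγ0, mul_nonneg (sub_nonneg.2 ht1) hβ.le]
  have h3 : (0:ℝ) ≤ α * γ - β * β := by linarith
  nlinarith [mul_pos h1 h2,
    mul_nonneg (mul_nonneg (sub_nonneg.2 hs1) (sub_nonneg.2 ht1)) h3]

lemma inner_seg_le (x p p' A B : F) (hp : p ∈ segment ℝ A B) (hp' : p' ∈ segment ℝ A B)
    (h : ⟪p - x, p' - x⟫ ≤ 0) : ⟪A - x, B - x⟫ ≤ 0 := by
  by_contra hpos
  push_neg at hpos
  obtain ⟨u, v, hu, hv, huv, hP⟩ := hp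
  obtain ⟨u', v', hu', hv', huv', hP'⟩ := hp'
  set U := A - x with hU
  set V := B - x with hV
  have e1 : p - x = (1 - v) • U + v • V := by
    rw [← hP, hU, hV, show u = 1 - v by linarith]; module
  have e2 : p' - x = (1 - v') • U + v' • V := by
    rw [← hP', hU, hV, show u' = 1 - v' by linarith]; module
  have hcs : ⟪U, V⟫ * ⟪U, V⟫ ≤ ⟪U, U⟫ * ⟪V, V⟫ := real_inner_mul_inner_self_le U V
  have hexp : ⟪p - x, p' - x⟫ =
      (1 - v) * (1 - v') * ⟪U, U⟫ + ((1 - v) * v' + v * (1 - v')) * ⟪U, V⟫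
        + v * v' * ⟪V, V⟫ := by
    rw [e1, e2]
    simp only [inner_add_left, inner_add_right, real_inner_smul_left, real_inner_smul_right,
      real_inner_comm U V]
    ring
  have hv1 : v ≤ 1 := by linarith
  have hv'1 : v' ≤ 1 := by linarith
  have := key_real ⟪U, U⟫ ⟪U, V⟫ ⟪V, V⟫ v v' real_inner_self_nonneg
    real_inner_self_nonneg hcs hpos hv hv1 hv' hv'1
  rw [hexp] at h
  linarith

lemma exists_common (A B C : F) :
    ∃ q : F, ⟪A - q, B - q⟫ ≤ 0 ∧ ⟪A - q, C - q⟫ ≤ 0 ∧ ⟪B - q, C - q⟫ ≤ 0 := by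
  by_cases hA : ⟪B - A, C - A⟫ ≤ 0
  · exact ⟨A, by simp, by simp, by rwa [real_inner_comm] at hA ⊢⟩
  by_cases hB : ⟪A - B, C - B⟫ ≤ 0
  · exact ⟨B, by simp, hB, by simp⟩
  by_cases hC : ⟪A - C, B - C⟫ ≤ 0
  · exact ⟨C, hC, by simp, by simp⟩
  push_neg at hA hB hC
  set u := B - A with hu
  set v := C - A with hv
  set α := ⟪u, u⟫ with hαd
  set β := ⟪u, v⟫ with hβd
  set γ := ⟪v, v⟫ with hγd
  have hβ : 0 < β := hA
  have hab : β < α := by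
    have he : ⟪A - B, C - B⟫ = α - β := by
      rw [show A - B = -u by rw [hu]; abel, show C - B = v - u by rw [hu, hv]; abel,
        inner_neg_left, inner_sub_right, ← hαd, ← hβd]
      ring
    rw [he] at hB; linarith
  have hgb : β < γ := by
    have he : ⟪A - C, B - C⟫ = γ - β := by
      rw [show A - C = -v by rw [hv]; abel, show B - C = u - v by rw [hu, hv]; abel,
        inner_neg_left, inner_sub_right, real_inner_comm u v, ← hβd, ← hγd]
      ring
    rw [he] at hC; linarith
  have hD : 0 < α * γ - β * β := by nlinarith
  have hDne : α * γ - β * β ≠ 0 := ne_of_gt hD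
  set s := β * (γ - β) / (α * γ - β * β) with hsd
  set t := β * (α - β) / (α * γ - β * β) with htd
  have hinner : ∀ c1 c2 d1 d2 : ℝ,
      ⟪c1 • u + c2 • v, d1 • u + d2 • v⟫ =
        c1 * d1 * α + (c1 * d2 + c2 * d1) * β + c2 * d2 * γ := by
    intro c1 c2 d1 d2
    simp only [inner_add_left, inner_add_right, real_inner_smul_left, real_inner_smul_right,
      real_inner_comm u v, ← hαd, ← hβd, ← hγd]
    ring
  have hknn : 0 ≤ β * (α - β) * (γ - β) / (α * γ - β * β) :=
    div_nonneg (mul_nonneg (mul_nonneg hβ.le (by linarith)) (by linarith)) hD.le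
  refine ⟨A + (s • u + t • v), ?_, ?_, ?_⟩
  · have e1 : A - (A + (s • u + t • v)) = (-s) • u + (-t) • v := by module
    have e2 : B - (A + (s • u + t • v)) = (1 - s) • u + (-t) • v := by
      rw [show B = A + u by rw [hu]; abel]; module
    rw [e1, e2, hinner]
    have : (-s) * (1 - s) * α + ((-s) * (-t) + (-t) * (1 - s)) * β + (-t) * (-t) * γ
        = -(β * (α - β) * (γ - β) / (α * γ - β * β)) := by
      rw [hsd, htd]; have hD2 : γ * α - β ^ 2 ≠ 0 := by rw [sq, mul_comm]; exact hDne
      field_simp; ring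
    rw [this]
    linarith [hknn]
  · have e1 : A - (A + (s • u + t • v)) = (-s) • u + (-t) • v := by module
    have e2 : C - (A + (s • u + t • v)) = (-s) • u + (1 - t) • v := by
      rw [show C = A + v by rw [hv]; abel]; module
    rw [e1, e2, hinner]
    have : (-s) * (-s) * α + ((-s) * (1 - t) + (-t) * (-s)) * β + (-t) * (1 - t) * γ
        = -(β * (α - β) * (γ - β) / (α * γ - β * β)) := by
      rw [hsd, htd]; have hD2 : γ * α - β ^ 2 ≠ 0 := by rw [sq, mul_comm]; exact hDne
      field_simp; ring
    rw [this]
    linarith [hknn]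
  · have e1 : B - (A + (s • u + t • v)) = (1 - s) • u + (-t) • v := by
      rw [show B = A + u by rw [hu]; abel]; module
    have e2 : C - (A + (s • u + t • v)) = (-s) • u + (1 - t) • v := by
      rw [show C = A + v by rw [hv]; abel]; module
    rw [e1, e2, hinner]
    have : (1 - s) * (-s) * α + ((1 - s) * (1 - t) + (-t) * (-s)) * β + (-t) * (1 - t) * γ
        = -(β * (α - β) * (γ - β) / (α * γ - β * β)) := by
      rw [hsd, htd]; have hD2 : γ * α - β ^ 2 ≠ 0 := by rw [sq, mul_comm]; exact hDne
      field_simp; ring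
    rw [this]
    linarith [hknn]

lemma mem_diskD_iff' (A B x : F) :
    dist x (midpoint ℝ A B) ≤ dist A B / 2 ↔ ⟪A - x, B - x⟫ ≤ 0 := by
  have hpar := EuclideanGeometry.dist_sq_add_dist_sq_eq_two_mul_dist_midpoint_sq_add_half_dist_sq
    x A B
  have hlc := real_inner_eq_norm_mul_self_add_norm_mul_self_sub_norm_sub_mul_self_div_two
    (A - x) (B - x)
  rw [show (A - x) - (B - x) = A - B by abel, ← dist_eq_norm, ← dist_eq_norm, ← dist_eq_norm,
    dist_comm A x, dist_comm B x] at hlc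
  have key : ⟪A - x, B - x⟫ = dist x (midpoint ℝ A B) ^ 2 - (dist A B / 2) ^ 2 := by
    rw [hlc]; linear_combination hpar / 2
  constructor
  · intro hle
    rw [key]
    nlinarith [mul_self_le_mul_self (dist_nonneg (x := x) (y := midpoint ℝ A B)) hle]
  · intro hle
    rw [key] at hle
    by_contra hgt
    push_neg at hgt
    have h0 : (0:ℝ) ≤ dist A B / 2 := by positivity
    nlinarith [hgt, h0]

end Aux

theorem pairwise_intersecting_segments_disks_intersect
    (a b : Fin 3 → EuclideanSpace ℝ (Fin 2))
    (h : ∀ i j, (segment ℝ (a i) (b i) ∩ segment ℝ (a j) (b j)).Nonempty) :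
    ∃ q, ∀ i, q ∈ diskD (a i) (b i) := by
  obtain ⟨p01, hp01⟩ := h 0 1
  obtain ⟨p02, hp02⟩ := h 0 2
  obtain ⟨p12, hp12⟩ := h 1 2
  obtain ⟨q, h1, h2, h3⟩ := exists_common p01 p02 p12
  refine ⟨q, ?_⟩
  intro i
  simp only [diskD, Metric.mem_closedBall]
  rw [mem_diskD_iff']
  fin_cases i
  · exact inner_seg_le q p01 p02 _ _ hp01.1 hp02.1 h1
  · exact inner_seg_le q p01 p12 _ _ hp01.2 hp12.1 h2
  · exact inner_seg_le q p02 p12 _ _ hp02.2 hp12.2 h3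
end

section
/- Let S be a set of 2n+1 points in the plane in convex position, labeled x₁,…,x_{2n+1} in clockwise order along the boundary of their convex hull. The Hamiltonian cycle obtained by joining x_i to x_{i+n} and x_{i+n+1} (indices modulo 2n+1) is a Tverberg graph: the closed disks having the edges of this cycle as diameters have a common point. -/
set_option maxHeartbeats 1000000

open Real

/-- The planar cross product (signed area determinant) of two vectors. -/
def cross2 (u v : EuclideanSpace ℝ (Fin 2)) : ℝ := u 0 * v 1 - u 1 * v 0

/- ### Auxiliary algebraic lemmas -/

lemma key_orthocenter (a0 a1 b0 b1 c0 c1 k : ℝ)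
    (hab : a0*b0 + a1*b1 = k) (hac : a0*c0 + a1*c1 = k) (hbc : b0*c0 + b1*c1 = k)
    (hA : k < a0^2 + a1^2) (hB : k < b0^2 + b1^2) (hC : k < c0^2 + c1^2) : k ≤ 0 := by
  by_contra hk
  push_neg at hk
  set α := b0*c1 - b1*c0 with hα
  set β := c0*a1 - c1*a0 with hβ
  set γ := a0*b1 - a1*b0 with hγ
  have dep0 : α*a0 + β*b0 + γ*c0 = 0 := by rw [hα, hβ, hγ]; ring
  have dep1 : α*a1 + β*b1 + γ*c1 = 0 := by rw [hα, hβ, hγ]; ring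
  set A' := a0^2+a1^2 - k with hA'
  set B' := b0^2+b1^2 - k with hB'
  set C' := c0^2+c1^2 - k with hC'
  have hA'pos : 0 < A' := by rw [hA']; linarith
  have hB'pos : 0 < B' := by rw [hB']; linarith
  have hC'pos : 0 < C' := by rw [hC']; linarith
  set s := α + β + γ with hs
  have eA : α*A' = -(k*s) := by
    rw [hA', hs]; linear_combination a0*dep0 + a1*dep1 - β*hab - γ*hac
  have eB : β*B' = -(k*s) := by
    rw [hB', hs]; linear_combination b0*dep0 + b1*dep1 - α*hab - γ*hbc
  have eC : γ*C' = -(k*s) := by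
    rw [hC', hs]; linear_combination c0*dep0 + c1*dep1 - α*hac - β*hbc
  have hfac : s * (A'*B'*C' + k*(B'*C' + A'*C' + A'*B')) = 0 := by
    linear_combination (B'*C')*eA + (A'*C')*eB + (A'*B')*eC
  have hpos : 0 < A'*B'*C' + k*(B'*C' + A'*C' + A'*B') := by
    have h1 := mul_pos (mul_pos hA'pos hB'pos) hC'pos
    nlinarith [mul_pos hA'pos hB'pos, mul_pos hB'pos hC'pos, mul_pos hA'pos hC'pos,
      mul_pos hk (mul_pos hA'pos hB'pos), mul_pos hk (mul_pos hB'pos hC'pos),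
      mul_pos hk (mul_pos hA'pos hC'pos)]
  have hs0 : s = 0 := by
    rcases mul_eq_zero.mp hfac with h | h
    · exact h
    · exact absurd h (ne_of_gt hpos)
  have hα0 : α = 0 := by
    have : α * A' = 0 := by rw [eA, hs0]; ring
    exact (mul_eq_zero.mp this).resolve_right (ne_of_gt hA'pos)
  have lag : (b0*c0 + b1*c1)^2 + (b0*c1 - b1*c0)^2 = (b0^2+b1^2)*(c0^2+c1^2) := by ring
  rw [hbc, ← hα, hα0] at lag
  have h2 : k*k < (b0^2+b1^2)*(c0^2+c1^2) := mul_lt_mul'' hB hC hk.le hk.le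
  nlinarith [lag, h2]

/-- Subsegment lemma in coordinates. -/
lemma seg_dot (q0 q1 a0 a1 b0 b1 s t : ℝ) (hs0 : 0 ≤ s) (hs1 : s ≤ 1)
    (ht0 : 0 ≤ t) (ht1 : t ≤ 1)
    (h : (q0 - (a0 + s*(b0-a0))) * (q0 - (a0 + t*(b0-a0)))
       + (q1 - (a1 + s*(b1-a1))) * (q1 - (a1 + t*(b1-a1))) ≤ 0) :
    (q0-a0)*(q0-b0) + (q1-a1)*(q1-b1) ≤ 0 := by
  by_contra hP
  push_neg at hP
  obtain ⟨X, hX⟩ : ∃ X, X = (q0-a0)^2 + (q1-a1)^2 := ⟨_, rfl⟩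
  obtain ⟨Y, hY⟩ : ∃ Y, Y = (q0-b0)^2 + (q1-b1)^2 := ⟨_, rfl⟩
  obtain ⟨P, hPd⟩ : ∃ P, P = (q0-a0)*(q0-b0) + (q1-a1)*(q1-b1) := ⟨_, rfl⟩
  rw [← hPd] at hP
  have hXpos : 0 < X := by
    rcases eq_or_lt_of_le (by rw [hX]; positivity : (0:ℝ) ≤ X) with h0 | h0
    · exfalso
      have h1 : q0 - a0 = 0 := by nlinarith [sq_nonneg (q0-a0), sq_nonneg (q1-a1)]
      have h2 : q1 - a1 = 0 := by nlinarith [sq_nonneg (q0-a0), sq_nonneg (q1-a1)]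
      rw [hPd, h1, h2] at hP; simp at hP
    · exact h0
  have hYpos : 0 < Y := by
    rcases eq_or_lt_of_le (by rw [hY]; positivity : (0:ℝ) ≤ Y) with h0 | h0
    · exfalso
      have h1 : q0 - b0 = 0 := by nlinarith [sq_nonneg (q0-b0), sq_nonneg (q1-b1)]
      have h2 : q1 - b1 = 0 := by nlinarith [sq_nonneg (q0-b0), sq_nonneg (q1-b1)]
      rw [hPd, h1, h2] at hP; simp at hP
    · exact h0
  have expand : (1-s)*(1-t)*X + ((1-s)*t + s*(1-t))*P + s*t*Y ≤ 0 := by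
    have hid : (1-s)*(1-t)*X + ((1-s)*t + s*(1-t))*P + s*t*Y
        = (q0 - (a0 + s*(b0-a0))) * (q0 - (a0 + t*(b0-a0)))
        + (q1 - (a1 + s*(b1-a1))) * (q1 - (a1 + t*(b1-a1))) := by
      rw [hX, hY, hPd]; ring
    rw [hid]; exact h
  have c1 : 0 ≤ (1-s)*(1-t) := by nlinarith
  have c2 : 0 ≤ (1-s)*t + s*(1-t) := by nlinarith
  have c3 : 0 ≤ s*t := by positivity
  have t1 : 0 ≤ (1-s)*(1-t)*X := mul_nonneg c1 hXpos.le
  have t2 : 0 ≤ ((1-s)*t + s*(1-t))*P := mul_nonneg c2 hP.le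
  have t3 : 0 ≤ s*t*Y := mul_nonneg c3 hYpos.le
  have z1 : (1-s)*(1-t)*X = 0 := by linarith
  have z2 : ((1-s)*t + s*(1-t))*P = 0 := by linarith
  have z3 : s*t*Y = 0 := by linarith
  have e1 : (1-s)*(1-t) = 0 := (mul_eq_zero.mp z1).resolve_right (ne_of_gt hXpos)
  have e2 : (1-s)*t + s*(1-t) = 0 := (mul_eq_zero.mp z2).resolve_right (ne_of_gt hP)
  have e3 : s*t = 0 := (mul_eq_zero.mp z3).resolve_right (ne_of_gt hYpos)
  nlinarith [e1, e2, e3]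

/-- Arithmetic core of the segment crossing lemma. -/
lemma cross_core (gc gd ha hb D : ℝ) (hg : gc*gd < 0) (hh : ha*hb < 0)
    (hDg : gd - gc = D) (hDh : ha - hb = D) :
    0 ≤ ha/D ∧ ha/D ≤ 1 ∧ 0 ≤ -gc/D ∧ -gc/D ≤ 1 ∧ D ≠ 0 := by
  have hDne : D ≠ 0 := by
    intro h0
    have h1 : gc = gd := by linarith
    rw [h1] at hg
    nlinarith [sq_nonneg gd]
  rcases lt_or_gt_of_ne hDne with hDlt | hDgt
  · have h1 : ha < 0 := by nlinarith
    have h2 : 0 < hb := by nlinarith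
    have h3 : gc > 0 := by nlinarith
    have h4 : gd < 0 := by nlinarith
    refine ⟨?_, ?_, ?_, ?_, hDne⟩
    · rw [show ha/D = (-ha)/(-D) by ring]
      exact div_nonneg (by linarith) (by linarith)
    · rw [show ha/D = (-ha)/(-D) by ring]
      rw [div_le_one (by linarith : (0:ℝ) < -D)]
      linarith
    · rw [show -gc/D = gc/(-D) by ring]
      exact div_nonneg (by linarith) (by linarith)
    · rw [show -gc/D = gc/(-D) by ring]
      rw [div_le_one (by linarith : (0:ℝ) < -D)]
      linarith
  · have h1 : 0 < ha := by nlinarith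
    have h2 : hb < 0 := by nlinarith
    have h3 : gc < 0 := by nlinarith
    have h4 : 0 < gd := by nlinarith
    refine ⟨?_, ?_, ?_, ?_, hDne⟩
    · exact div_nonneg h1.le hDgt.le
    · rw [div_le_one hDgt]; linarith
    · exact div_nonneg (by linarith) hDgt.le
    · rw [div_le_one hDgt]; linarith

/-- Two segments with endpoints strictly on opposite sides of each other's lines intersect. -/
lemma seg_cross (a0 a1 b0 b1 c0 c1 d0 d1 : ℝ)
    (hg : ((b0-a0)*(c1-a1)-(b1-a1)*(c0-a0)) * ((b0-a0)*(d1-a1)-(b1-a1)*(d0-a0)) < 0)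
    (hh : ((d0-c0)*(a1-c1)-(d1-c1)*(a0-c0)) * ((d0-c0)*(b1-c1)-(d1-c1)*(b0-c0)) < 0) :
    ∃ s t : ℝ, 0 ≤ s ∧ s ≤ 1 ∧ 0 ≤ t ∧ t ≤ 1 ∧
      a0 + s*(b0-a0) = c0 + t*(d0-c0) ∧ a1 + s*(b1-a1) = c1 + t*(d1-c1) := by
  obtain ⟨hs0, hs1, ht0, ht1, hDne⟩ := cross_core
    ((b0-a0)*(c1-a1)-(b1-a1)*(c0-a0)) ((b0-a0)*(d1-a1)-(b1-a1)*(d0-a0))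
    ((d0-c0)*(a1-c1)-(d1-c1)*(a0-c0)) ((d0-c0)*(b1-c1)-(d1-c1)*(b0-c0))
    ((b0-a0)*(d1-c1)-(b1-a1)*(d0-c0)) hg hh (by ring) (by ring)
  refine ⟨_, _, hs0, hs1, ht0, ht1, ?_, ?_⟩
  · rw [div_mul_eq_mul_div, div_mul_eq_mul_div, add_div' _ _ _ hDne, add_div' _ _ _ hDne, div_left_inj' hDne]
    ring
  · rw [div_mul_eq_mul_div, div_mul_eq_mul_div, add_div' _ _ _ hDne, add_div' _ _ _ hDne, div_left_inj' hDne]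
    ring

/-- For any three points in the plane there is a point `q` seeing each pair at angle ≥ 90°. -/
lemma triangle_dots (A0 A1 B0 B1 C0 C1 : ℝ) :
    ∃ q0 q1 : ℝ,
      (q0-A0)*(q0-B0) + (q1-A1)*(q1-B1) ≤ 0 ∧
      (q0-B0)*(q0-C0) + (q1-B1)*(q1-C1) ≤ 0 ∧
      (q0-A0)*(q0-C0) + (q1-A1)*(q1-C1) ≤ 0 := by
  by_cases hB : (A0-B0)*(C0-B0) + (A1-B1)*(C1-B1) ≤ 0
  · exact ⟨B0, B1, by nlinarith, by nlinarith, by nlinarith⟩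
  by_cases hA : (B0-A0)*(C0-A0) + (B1-A1)*(C1-A1) ≤ 0
  · exact ⟨A0, A1, by nlinarith, by nlinarith, by nlinarith⟩
  by_cases hC : (A0-C0)*(B0-C0) + (A1-C1)*(B1-C1) ≤ 0
  · exact ⟨C0, C1, by nlinarith, by nlinarith, by nlinarith⟩
  push_neg at hA hB hC
  have hDne : (B0-A0)*(C1-A1) - (B1-A1)*(C0-A0) ≠ 0 := by
    intro h0
    have lag : ((B0-A0)*(C0-A0) + (B1-A1)*(C1-A1))^2
        + ((B0-A0)*(C1-A1) - (B1-A1)*(C0-A0))^2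
        = ((B0-A0)^2+(B1-A1)^2) * ((C0-A0)^2+(C1-A1)^2) := by ring
    rw [h0] at lag
    have e1 : (B0-A0)*(C0-A0) + (B1-A1)*(C1-A1) < (B0-A0)^2+(B1-A1)^2 := by nlinarith
    have e2 : (B0-A0)*(C0-A0) + (B1-A1)*(C1-A1) < (C0-A0)^2+(C1-A1)^2 := by nlinarith
    nlinarith [hA, e1, e2, lag]
  obtain ⟨q0, hq0⟩ : ∃ v, v = ((A0*(B0-C0) + A1*(B1-C1))*(C1-A1)
      - (B0*(C0-A0) + B1*(C1-A1))*(B1-C1)) / ((B0-A0)*(C1-A1) - (B1-A1)*(C0-A0)) := ⟨_, rfl⟩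
  obtain ⟨q1, hq1⟩ : ∃ v, v = ((B0-C0)*(B0*(C0-A0) + B1*(C1-A1))
      - (C0-A0)*(A0*(B0-C0) + A1*(B1-C1))) / ((B0-A0)*(C1-A1) - (B1-A1)*(C0-A0)) := ⟨_, rfl⟩
  have e0 : q0 * ((B0-A0)*(C1-A1) - (B1-A1)*(C0-A0)) = ((A0*(B0-C0) + A1*(B1-C1))*(C1-A1)
      - (B0*(C0-A0) + B1*(C1-A1))*(B1-C1)) := by rw [hq0]; exact div_mul_cancel₀ _ hDne
  have e1 : q1 * ((B0-A0)*(C1-A1) - (B1-A1)*(C0-A0)) = ((B0-C0)*(B0*(C0-A0) + B1*(C1-A1))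
      - (C0-A0)*(A0*(B0-C0) + A1*(B1-C1))) := by rw [hq1]; exact div_mul_cancel₀ _ hDne
  have orth1 : (q0-A0)*(B0-C0) + (q1-A1)*(B1-C1) = 0 := by
    apply mul_right_cancel₀ hDne; linear_combination (B0-C0)*e0 + (B1-C1)*e1
  have orth2 : (q0-B0)*(C0-A0) + (q1-B1)*(C1-A1) = 0 := by
    apply mul_right_cancel₀ hDne; linear_combination (C0-A0)*e0 + (C1-A1)*e1
  obtain ⟨k, hk⟩ : ∃ v, v = (A0-q0)*(B0-q0) + (A1-q1)*(B1-q1) := ⟨_, rfl⟩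
  have hac' : (A0-q0)*(C0-q0) + (A1-q1)*(C1-q1) = k := by linear_combination orth1 - hk
  have hbc' : (B0-q0)*(C0-q0) + (B1-q1)*(C1-q1) = k := by linear_combination (-1)*orth2 - hk
  have idA : (B0-A0)*(C0-A0)+(B1-A1)*(C1-A1) = ((A0-q0)^2+(A1-q1)^2) - k := by
    linear_combination hbc' - hac' + hk
  have idB : (A0-B0)*(C0-B0)+(A1-B1)*(C1-B1) = ((B0-q0)^2+(B1-q1)^2) - k := by
    linear_combination hac' - hbc' + hk
  have idC : (A0-C0)*(B0-C0)+(A1-C1)*(B1-C1) = ((C0-q0)^2+(C1-q1)^2) - k := by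
    linear_combination (-1)*hk - hac' - hbc'
  have hk0 : k ≤ 0 := by
    apply key_orthocenter (A0-q0) (A1-q1) (B0-q0) (B1-q1) (C0-q0) (C1-q1) k hk.symm hac' hbc'
    · linarith [hA, idA]
    · linarith [hB, idB]
    · linarith [hC, idC]
  have e1 : (q0-A0)*(q0-B0) + (q1-A1)*(q1-B1) = k := by linear_combination (-1)*hk
  have e2 : (q0-B0)*(q0-C0) + (q1-B1)*(q1-C1) = k := by linear_combination hbc'
  have e3 : (q0-A0)*(q0-C0) + (q1-A1)*(q1-C1) = k := by linear_combination hac'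
  exact ⟨q0, q1, by rw [e1]; exact hk0, by rw [e2]; exact hk0, by rw [e3]; exact hk0⟩

/- ### Interface with `EuclideanSpace` -/

lemma coord_dist (a b : EuclideanSpace ℝ (Fin 2)) :
    dist a b = Real.sqrt ((a 0 - b 0)^2 + (a 1 - b 1)^2) := by
  rw [EuclideanSpace.dist_eq, Fin.sum_univ_two]
  simp [Real.dist_eq, sq_abs]

lemma coord_midpoint (a b : EuclideanSpace ℝ (Fin 2)) (i : Fin 2) :
    (midpoint ℝ a b) i = (a i + b i)/2 := by
  rw [midpoint_eq_smul_add]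
  simp
  ring

lemma mem_diskD_iff (a b q : EuclideanSpace ℝ (Fin 2)) :
    q ∈ diskD a b ↔ (q 0 - a 0)*(q 0 - b 0) + (q 1 - a 1)*(q 1 - b 1) ≤ 0 := by
  rw [diskD, Metric.mem_closedBall, coord_dist, coord_dist,
    coord_midpoint, coord_midpoint]
  rw [show Real.sqrt ((a 0 - b 0)^2 + (a 1 - b 1)^2) / 2
      = Real.sqrt (((a 0 - b 0)^2 + (a 1 - b 1)^2)/4) by
    rw [show (4:ℝ) = 2^2 by norm_num, Real.sqrt_div (by positivity), Real.sqrt_sq (by norm_num)]]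
  rw [Real.sqrt_le_sqrt_iff (by positivity)]
  constructor <;> intro h <;> nlinarith [h]

/-- `p` lies on the segment from `a` to `b` (coordinatewise parametrization). -/
def onSeg (a b p : EuclideanSpace ℝ (Fin 2)) : Prop :=
  ∃ s : ℝ, 0 ≤ s ∧ s ≤ 1 ∧ p 0 = a 0 + s*(b 0 - a 0) ∧ p 1 = a 1 + s*(b 1 - a 1)

lemma onSeg_left (a b : EuclideanSpace ℝ (Fin 2)) : onSeg a b a :=
  ⟨0, le_refl _, by norm_num, by ring, by ring⟩

lemma onSeg_right (a b : EuclideanSpace ℝ (Fin 2)) : onSeg a b b :=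
  ⟨1, by norm_num, le_refl _, by ring, by ring⟩

lemma disk_of_onSeg (a b p r q : EuclideanSpace ℝ (Fin 2)) (hp : onSeg a b p)
    (hr : onSeg a b r)
    (h : (q 0 - p 0)*(q 0 - r 0) + (q 1 - p 1)*(q 1 - r 1) ≤ 0) :
    q ∈ diskD a b := by
  obtain ⟨s, hs0, hs1, hp0, hp1⟩ := hp
  obtain ⟨t, ht0, ht1, hr0, hr1⟩ := hr
  rw [mem_diskD_iff]
  apply seg_dot (q 0) (q 1) (a 0) (a 1) (b 0) (b 1) s t hs0 hs1 ht0 ht1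
  rw [← hp0, ← hp1, ← hr0, ← hr1]
  exact h

/-- Given three pairwise intersecting segments, their diametral disks share a point. -/
lemma triple_disks (a b a' b' a'' b'' p12 p13 p23 : EuclideanSpace ℝ (Fin 2))
    (h12 : onSeg a b p12) (h12' : onSeg a' b' p12)
    (h13 : onSeg a b p13) (h13' : onSeg a'' b'' p13)
    (h23 : onSeg a' b' p23) (h23' : onSeg a'' b'' p23) :
    ∃ q, q ∈ diskD a b ∧ q ∈ diskD a' b' ∧ q ∈ diskD a'' b'' := by
  obtain ⟨q0, q1, hAB, hBC, hAC⟩ :=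
    triangle_dots (p12 0) (p12 1) (p13 0) (p13 1) (p23 0) (p23 1)
  set q : EuclideanSpace ℝ (Fin 2) := (WithLp.equiv 2 (Fin 2 → ℝ)).symm ![q0, q1] with hq
  have hq0 : q 0 = q0 := by rw [hq]; simp
  have hq1 : q 1 = q1 := by rw [hq]; simp
  refine ⟨q, ?_, ?_, ?_⟩
  · exact disk_of_onSeg a b p12 p13 q h12 h13 (by rw [hq0, hq1]; exact hAB)
  · exact disk_of_onSeg a' b' p12 p23 q h12' h23 (by rw [hq0, hq1]; exact hAC)
  · exact disk_of_onSeg a'' b'' p13 p23 q h13' h23' (by rw [hq0, hq1]; exact hBC)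

/-- Crossing segments have a common point. -/
lemma cross_to_seg (a b c d : EuclideanSpace ℝ (Fin 2))
    (hg : ((b 0 - a 0)*(c 1 - a 1)-(b 1 - a 1)*(c 0 - a 0))
        * ((b 0 - a 0)*(d 1 - a 1)-(b 1 - a 1)*(d 0 - a 0)) < 0)
    (hh : ((d 0 - c 0)*(a 1 - c 1)-(d 1 - c 1)*(a 0 - c 0))
        * ((d 0 - c 0)*(b 1 - c 1)-(d 1 - c 1)*(b 0 - c 0)) < 0) :
    ∃ p, onSeg a b p ∧ onSeg c d p := by
  obtain ⟨s, t, hs0, hs1, ht0, ht1, he0, he1⟩ :=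
    seg_cross (a 0) (a 1) (b 0) (b 1) (c 0) (c 1) (d 0) (d 1) hg hh
  set p : EuclideanSpace ℝ (Fin 2) :=
    (WithLp.equiv 2 (Fin 2 → ℝ)).symm ![a 0 + s*(b 0 - a 0), a 1 + s*(b 1 - a 1)] with hp
  have hp0 : p 0 = a 0 + s*(b 0 - a 0) := by rw [hp]; simp
  have hp1 : p 1 = a 1 + s*(b 1 - a 1) := by rw [hp]; simp
  refine ⟨p, ⟨s, hs0, hs1, hp0, hp1⟩, ⟨t, ht0, ht1, ?_, ?_⟩⟩
  · rw [hp0, he0]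
  · rw [hp1, he1]

/-- A finset of cardinality at most 3 is covered by three elements. -/
lemma cover_three {β : Type*} [DecidableEq β] (z : β) (I : Finset β) (h : I.card ≤ 3) :
    ∃ i j k : β, ∀ a ∈ I, a = i ∨ a = j ∨ a = k := by
  have h4 : I.card = 0 ∨ I.card = 1 ∨ I.card = 2 ∨ I.card = 3 := by omega
  rcases h4 with h0 | h1 | h2 | h3
  · refine ⟨z, z, z, fun a ha => ?_⟩
    rw [Finset.card_eq_zero.mp h0] at ha
    exact absurd ha (Finset.notMem_empty a)
  · obtain ⟨i, hi⟩ := Finset.card_eq_one.mp h1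
    refine ⟨i, i, i, fun a ha => ?_⟩
    rw [hi, Finset.mem_singleton] at ha
    exact Or.inl ha
  · obtain ⟨i, j, _, hij⟩ := Finset.card_eq_two.mp h2
    refine ⟨i, j, j, fun a ha => ?_⟩
    rw [hij] at ha
    simp at ha
    tauto
  · obtain ⟨i, j, k, _, _, _, hijk⟩ := Finset.card_eq_three.mp h3
    refine ⟨i, j, k, fun a ha => ?_⟩
    rw [hijk] at ha
    simp at ha
    tauto

/-- For `2n+1` points in convex position labeled clockwise, the Hamiltonian cycle
joining `x i` to `x (i+n)` (and hence also to `x (i+n+1)`) is a Tverberg graph. -/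
theorem convex_position_odd_hamiltonian_cycle_tverberg
    (n : ℕ) (x : Fin (2 * n + 1) → EuclideanSpace ℝ (Fin 2))
    (hinj : Function.Injective x)
    (hclockwise : ∀ i j k : Fin (2 * n + 1), i < j → j < k →
      cross2 (x j - x i) (x k - x i) < 0) :
    ∃ q, ∀ i : Fin (2 * n + 1), q ∈ diskD (x i) (x (i + ⟨n, by omega⟩)) := by
  set n' : Fin (2 * n + 1) := ⟨n, by omega⟩ with hn'
  -- characterization of `% (2*n+1)` usable by `omega`
  have modfact : ∀ a : ℕ, a < 4*n+2 →
      (a < 2*n+1 ∧ a % (2*n+1) = a) ∨ (2*n+1 ≤ a ∧ a % (2*n+1) = a - (2*n+1)) := by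
    intro a ha
    rcases lt_or_ge a (2*n+1) with h | h
    · exact Or.inl ⟨h, Nat.mod_eq_of_lt h⟩
    · exact Or.inr ⟨h, by rw [Nat.mod_eq_sub_mod h, Nat.mod_eq_of_lt (by omega)]⟩
  -- orientation of cyclically ordered triples
  have hOr3 : ∀ a b c : Fin (2 * n + 1),
      ((a:ℕ) < b ∧ (b:ℕ) < c) ∨ ((b:ℕ) < c ∧ (c:ℕ) < a) ∨ ((c:ℕ) < a ∧ (a:ℕ) < b) →
      (x b 0 - x a 0)*(x c 1 - x a 1) - (x b 1 - x a 1)*(x c 0 - x a 0) < 0 := by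
    intro a b c hcyc
    rcases hcyc with ⟨h1, h2⟩ | ⟨h1, h2⟩ | ⟨h1, h2⟩
    · have := hclockwise a b c (by rwa [Fin.lt_def]) (by rwa [Fin.lt_def])
      simp only [cross2, PiLp.sub_apply] at this
      linarith
    · have := hclockwise b c a (by rwa [Fin.lt_def]) (by rwa [Fin.lt_def])
      simp only [cross2, PiLp.sub_apply] at this
      nlinarith [this]
    · have := hclockwise c a b (by rwa [Fin.lt_def]) (by rwa [Fin.lt_def])
      simp only [cross2, PiLp.sub_apply] at this
      nlinarith [this]
  have hvadd : ∀ i : Fin (2 * n + 1), ((i + n' : Fin (2 * n + 1)) : ℕ) = ((i:ℕ) + n) % (2*n+1) := by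
    intro i
    rw [Fin.add_def]
  -- the strict crossing case
  have key : ∀ i j : Fin (2 * n + 1), ∀ d : ℕ, 1 ≤ d → d + 1 ≤ n →
      (j:ℕ) = ((i:ℕ) + d) % (2*n+1) →
      ∃ p, onSeg (x i) (x (i + n')) p ∧ onSeg (x j) (x (j + n')) p := by
    intro i j d hd1 hdn hj
    have hi : (i:ℕ) < 2*n+1 := i.isLt
    have hjlt : (j:ℕ) < 2*n+1 := j.isLt
    have hin : ((i + n' : Fin (2*n+1)) : ℕ) = ((i:ℕ) + n) % (2*n+1) := hvadd i
    have hjn : ((j + n' : Fin (2*n+1)) : ℕ) = ((j:ℕ) + n) % (2*n+1) := hvadd j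
    have F1 := modfact ((i:ℕ) + n) (by omega)
    have F2 := modfact ((i:ℕ) + d) (by omega)
    have F3 := modfact ((j:ℕ) + n) (by omega)
    have C1 := hOr3 i j (i + n') (by omega)
    have C2 := hOr3 i (i + n') (j + n') (by omega)
    have C3 := hOr3 j (i + n') (j + n') (by omega)
    have C4 := hOr3 j (j + n') i (by omega)
    apply cross_to_seg
    · apply mul_neg_of_pos_of_neg
      · nlinarith [C1]
      · nlinarith [C2]
    · apply mul_neg_of_neg_of_pos
      · nlinarith [C4]
      · nlinarith [C3]
  -- any two edges of the cycle intersect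
  have pair : ∀ i j : Fin (2 * n + 1),
      ∃ p, onSeg (x i) (x (i + n')) p ∧ onSeg (x j) (x (j + n')) p := by
    intro i j
    by_cases hij : i = j
    · exact ⟨x i, onSeg_left _ _, by rw [← hij]; exact onSeg_left _ _⟩
    by_cases h2 : j = i + n'
    · exact ⟨x j, by rw [h2]; exact onSeg_right _ _, onSeg_left _ _⟩
    by_cases h3 : i = j + n'
    · exact ⟨x i, onSeg_left _ _, by rw [h3]; exact onSeg_right _ _⟩
    have hi : (i:ℕ) < 2*n+1 := i.isLt
    have hj : (j:ℕ) < 2*n+1 := j.isLt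
    have hin : ((i + n' : Fin (2*n+1)) : ℕ) = ((i:ℕ) + n) % (2*n+1) := hvadd i
    have hjn : ((j + n' : Fin (2*n+1)) : ℕ) = ((j:ℕ) + n) % (2*n+1) := hvadd j
    have hne : (i:ℕ) ≠ (j:ℕ) := fun h => hij (Fin.ext h)
    have hne2 : (j:ℕ) ≠ ((i:ℕ) + n) % (2*n+1) := fun h => h2 (Fin.ext (by rw [hin]; exact h))
    have hne3 : (i:ℕ) ≠ ((j:ℕ) + n) % (2*n+1) := fun h => h3 (Fin.ext (by rw [hjn]; exact h))
    have F1 := modfact ((i:ℕ) + n) (by omega)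
    have F3 := modfact ((j:ℕ) + n) (by omega)
    have F4 := modfact ((j:ℕ) + (2*n+1) - (i:ℕ)) (by omega)
    obtain ⟨d, hd⟩ : ∃ d : ℕ, d = ((j:ℕ) + (2*n+1) - (i:ℕ)) % (2*n+1) := ⟨_, rfl⟩
    have F2 := modfact ((i:ℕ) + d) (by omega)
    have hjd : (j:ℕ) = ((i:ℕ) + d) % (2*n+1) := by omega
    rcases lt_or_ge d n with hlt | hge
    · exact key i j d (by omega) (by omega) hjd
    · have F5 := modfact ((j:ℕ) + (2*n+1 - d)) (by omega)
      obtain ⟨p, hp1, hp2⟩ := key j i (2*n+1 - d) (by omega) (by omega) (by omega)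
      exact ⟨p, hp2, hp1⟩
  -- every triple of disks intersects
  have htriple : ∀ i j k : Fin (2 * n + 1), ∃ q,
      q ∈ diskD (x i) (x (i + n')) ∧ q ∈ diskD (x j) (x (j + n')) ∧
      q ∈ diskD (x k) (x (k + n')) := by
    intro i j k
    obtain ⟨p12, hp12, hp12'⟩ := pair i j
    obtain ⟨p13, hp13, hp13'⟩ := pair i k
    obtain ⟨p23, hp23, hp23'⟩ := pair j k
    exact triple_disks (x i) (x (i + n')) (x j) (x (j + n')) (x k) (x (k + n'))
      p12 p13 p23 hp12 hp12' hp13 hp13' hp23 hp23'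
  -- Helly's theorem
  have hhelly := Convex.helly_theorem' (𝕜 := ℝ)
    (F := fun i : Fin (2 * n + 1) => diskD (x i) (x (i + n'))) (s := Finset.univ)
    (fun i _ => convex_closedBall _ _) ?_
  · obtain ⟨q, hq⟩ := hhelly
    refine ⟨q, fun i => ?_⟩
    exact Set.mem_iInter₂.mp hq i (Finset.mem_univ i)
  · intro I _ hIcard
    have hrank : Module.finrank ℝ (EuclideanSpace ℝ (Fin 2)) = 2 := by simp
    rw [hrank] at hIcard
    obtain ⟨i, j, k, hcov⟩ := cover_three (⟨0, by omega⟩ : Fin (2*n+1)) I hIcard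
    obtain ⟨q, hqi, hqj, hqk⟩ := htriple i j k
    refine ⟨q, Set.mem_biInter fun a haI => ?_⟩
    rcases hcov a haI with rfl | rfl | rfl <;> assumption
end

section
/- For any triangle xyz in the plane and α = 2π/3, the three α-lenses α(x,y), α(y,z), α(x,z) have a common point. Equivalently, either some angle of the triangle is at least 2π/3, or there exists a point p inside the triangle with ∠xpy = ∠ypz = ∠zpx = 2π/3. -/
open Real EuclideanGeometry

/-- The `α`-lens of the pair `a b`: points (including the endpoints themselves)
from which the segment `ab` subtends an angle at least `α`. -/
def lens (α : ℝ) (a b : EuclideanSpace ℝ (Fin 2)) : Set (EuclideanSpace ℝ (Fin 2)) :=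
  {p | p = a ∨ p = b ∨ α ≤ ∠ a p b}

/-!
Let `p` minimise the total distance `q ↦ |qx| + |qy| + |qz|`; it exists because this sum is
coercive. Fix two of the points, `a` and `b`, with `p ≠ a, b`, and let `s` be the sum of the unit
vectors from `p` towards `a` and `b`. Moving from `p` to `p + t • s` shortens `|qa| + |qb|` at rate
`‖s‖²`, while the third distance, being `1`-Lipschitz, grows at rate at most `‖s‖`. Minimality
forces `‖s‖ ≤ 1`, i.e. the two unit vectors make an angle of at least `2π/3`, so `p` lies in
every lens.
-/

open RealInnerProductSpace Set

theorem IsMinOn.nonneg_of_hasDerivWithinAt_Ici {f : ℝ → ℝ} {f' a : ℝ}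
    (hmin : IsMinOn f (Ici a) a) (hf : HasDerivWithinAt f f' (Ici a) a) : 0 ≤ f' := by
  have h1 : (1 : ℝ) ∈ posTangentConeAt (Ici a) a :=
    mem_posTangentConeAt_of_segment_subset
      ((segment_subset_Icc (by simp)).trans Icc_subset_Ici_self)
  simpa using hmin.localize.hasFDerivWithinAt_nonneg hf.hasFDerivWithinAt h1

section InnerProductSpace

variable {E : Type*} [NormedAddCommGroup E] [InnerProductSpace ℝ E]

theorem norm_inv_norm_smul {a : E} (ha : a ≠ 0) : ‖‖a‖⁻¹ • a‖ = 1 := by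
  simpa using norm_smul_inv_norm (𝕜 := ℝ) ha

theorem two_pi_div_three_le_angle_of_norm_add_le_one {a b : E} (ha : a ≠ 0) (hb : b ≠ 0)
    (h : ‖‖a‖⁻¹ • a + ‖b‖⁻¹ • b‖ ≤ 1) : 2 * π / 3 ≤ InnerProductGeometry.angle a b := by
  have hcos : ⟪a, b⟫ / (‖a‖ * ‖b‖) ≤ -(1 / 2) := by
    have hsq := norm_add_sq_real (‖a‖⁻¹ • a) (‖b‖⁻¹ • b)
    rw [norm_inv_norm_smul ha, norm_inv_norm_smul hb, real_inner_smul_left,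
      real_inner_smul_right] at hsq
    have : ‖a‖⁻¹ * (‖b‖⁻¹ * ⟪a, b⟫) = ⟪a, b⟫ / (‖a‖ * ‖b‖) := by field_simp
    nlinarith [norm_nonneg (‖a‖⁻¹ • a + ‖b‖⁻¹ • b)]
  have harccos : arccos (-(1 / 2)) = 2 * π / 3 := by
    rw [arccos_neg, ← cos_pi_div_three, arccos_cos (by positivity) (by linarith [pi_pos])]
    ring
  rw [← harccos]
  exact arccos_le_arccos hcos

theorem hasDerivAt_norm_add_smul {c : E} (hc : c ≠ 0) (v : E) :
    HasDerivAt (fun t : ℝ => ‖c + t • v‖) ⟪‖c‖⁻¹ • c, v⟫ 0 := by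
  have hline : HasDerivAt (fun t : ℝ => c + t • v) v 0 := by
    simpa using ((hasDerivAt_id (0 : ℝ)).smul_const v).const_add c
  have := hline.norm_sq.sqrt (by simpa using hc)
  simp only [Real.sqrt_sq (norm_nonneg _)] at this
  convert this using 1
  simp only [zero_smul, add_zero, real_inner_smul_left]
  field_simp

theorem norm_add_le_one_of_forall_dist_add_dist_add_le {g : E → ℝ} (hg : LipschitzWith 1 g)
    {a b p : E} (hpa : p ≠ a) (hpb : p ≠ b)
    (hmin : ∀ q, dist p a + dist p b + g p ≤ dist q a + dist q b + g q) :
    ‖‖a - p‖⁻¹ • (a - p) + ‖b - p‖⁻¹ • (b - p)‖ ≤ 1 := by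
  set s := ‖a - p‖⁻¹ • (a - p) + ‖b - p‖⁻¹ • (b - p)
  let ψ : ℝ → ℝ := fun t => dist (p + t • s) a + dist (p + t • s) b + t * ‖s‖
  have hψ : HasDerivAt ψ (‖s‖ - ‖s‖ ^ 2) 0 := by
    have hdist (c : E) : (fun t : ℝ => dist (p + t • s) c) = fun t => ‖(p - c) + t • s‖ := by
      ext t; rw [dist_eq_norm, add_sub_right_comm]
    have hunit (c : E) : ‖p - c‖⁻¹ • (p - c) = -(‖c - p‖⁻¹ • (c - p)) := by
      rw [← neg_sub c p, norm_neg, smul_neg]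
    have ha := hasDerivAt_norm_add_smul (sub_ne_zero.2 hpa) s
    have hb := hasDerivAt_norm_add_smul (sub_ne_zero.2 hpb) s
    rw [← hdist, hunit] at ha
    rw [← hdist, hunit] at hb
    refine ((ha.add hb).add ((hasDerivAt_id 0).mul_const ‖s‖)).congr_deriv ?_
    rw [inner_neg_left, inner_neg_left, ← neg_add, ← inner_add_left, real_inner_self_eq_norm_sq]
    ring
  have hψmin : IsMinOn ψ (Ici 0) 0 := by
    intro t (ht : 0 ≤ t)
    have hstep : dist (p + t • s) p = t * ‖s‖ := by
      rw [dist_eq_norm, add_sub_cancel_left, norm_smul, Real.norm_of_nonneg ht]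
    have hq := hmin (p + t • s)
    have hgq := hg.dist_le_mul (p + t • s) p
    rw [NNReal.coe_one, one_mul, Real.dist_eq, hstep] at hgq
    simp only [ψ, zero_smul, add_zero, zero_mul, mem_ofPred_eq]
    linarith [le_abs_self (g (p + t • s) - g p)]
  have := hψmin.nonneg_of_hasDerivWithinAt_Ici hψ.hasDerivWithinAt
  nlinarith [norm_nonneg s]

end InnerProductSpace

theorem mem_lens_of_forall_dist_add_dist_add_dist_le {a b c p : EuclideanSpace ℝ (Fin 2)}
    (hmin : ∀ q, dist p a + dist p b + dist p c ≤ dist q a + dist q b + dist q c) :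
    p ∈ lens (2 * π / 3) a b := by
  by_cases hpa : p = a
  · exact Or.inl hpa
  by_cases hpb : p = b
  · exact Or.inr (Or.inl hpb)
  refine Or.inr (Or.inr ?_)
  rw [EuclideanGeometry.angle, vsub_eq_sub, vsub_eq_sub]
  exact two_pi_div_three_le_angle_of_norm_add_le_one (sub_ne_zero.2 (Ne.symm hpa))
    (sub_ne_zero.2 (Ne.symm hpb))
    (norm_add_le_one_of_forall_dist_add_dist_add_le (LipschitzWith.dist_left c) hpa hpb hmin)

theorem lenses_two_pi_div_three_of_triangle_intersect_general
    (x y z : EuclideanSpace ℝ (Fin 2)) :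
    ∃ p, p ∈ lens (2 * π / 3) x y ∧ p ∈ lens (2 * π / 3) y z ∧
      p ∈ lens (2 * π / 3) x z := by
  have hcoercive : Filter.Tendsto (fun q => dist q x + dist q y + dist q z)
      (Filter.cocompact _) Filter.atTop := by
    refine Filter.tendsto_atTop_mono (fun q => ?_) (tendsto_dist_right_cocompact_atTop x)
    linarith [dist_nonneg (x := q) (y := y), dist_nonneg (x := q) (y := z)]
  obtain ⟨p, hp⟩ := (by fun_prop : Continuous _).exists_forall_le hcoercive
  exact ⟨p, mem_lens_of_forall_dist_add_dist_add_dist_le hp,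
    mem_lens_of_forall_dist_add_dist_add_dist_le (c := x) fun q => by linarith [hp q],
    mem_lens_of_forall_dist_add_dist_add_dist_le (c := y) fun q => by linarith [hp q]⟩

theorem lenses_two_pi_div_three_of_triangle_intersect
    (x y z : EuclideanSpace ℝ (Fin 2)) (h : AffineIndependent ℝ ![x, y, z]) :
    ∃ p, p ∈ lens (2 * π / 3) x y ∧ p ∈ lens (2 * π / 3) y z ∧
      p ∈ lens (2 * π / 3) x z :=
  lenses_two_pi_div_three_of_triangle_intersect_general x y z
end

section
/- Let S be the four vertices of a square in the plane. For any α > π/2 and any Hamiltonian cycle G on S, the intersection of the α-lenses α(e) over all edges e of G is empty. -/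
open Real EuclideanGeometry
open scoped RealInnerProductSpace

/-- The `α`-lens of the pair `a b`: points (including the endpoints themselves)
from which the segment `ab` subtends an angle at least `α`. -/
def lensC (α : ℝ) (a b : ℂ) : Set ℂ :=
  {p | p = a ∨ p = b ∨ α ≤ ∠ a p b}

lemma lensC_comm (α : ℝ) (a b : ℂ) : lensC α a b = lensC α b a := by
  ext p
  simp only [lensC, Set.mem_setOf_eq, EuclideanGeometry.angle_comm a p b]
  tauto

lemma lensC_subset_disk {α : ℝ} (hα : π / 2 ≤ α) {a b q : ℂ}
    (hq : q ∈ lensC α a b) : ‖2 * q - a - b‖ ≤ ‖a - b‖ := by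
  rcases hq with rfl | rfl | h
  · rw [show 2 * q - q - b = q - b by ring]
  · rw [show 2 * q - a - q = -(a - q) by ring, norm_neg]
  · have hab : α ≤ InnerProductGeometry.angle (a - q) (b - q) := by
      simpa [EuclideanGeometry.angle] using h
    have hcos : Real.cos (InnerProductGeometry.angle (a - q) (b - q)) ≤ 0 :=
      Real.cos_nonpos_of_pi_div_two_le_of_le (le_trans hα hab)
        (le_trans (InnerProductGeometry.angle_le_pi _ _) (by linarith [Real.pi_pos]))
    have hinner : ⟪a - q, b - q⟫ ≤ 0 := by
      rw [← InnerProductGeometry.cos_angle_mul_norm_mul_norm]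
      exact mul_nonpos_of_nonpos_of_nonneg hcos (by positivity)
    have h1 : ‖2 * q - a - b‖ = ‖(a - q) + (b - q)‖ := by
      rw [show (a - q) + (b - q) = -(2 * q - a - b) by ring, norm_neg]
    have h2 : ‖a - b‖ = ‖(a - q) - (b - q)‖ := by congr 1; ring
    rw [h1, h2]
    have e1 := norm_add_sq_real (a - q) (b - q)
    have e2 := norm_sub_sq_real (a - q) (b - q)
    nlinarith [norm_nonneg ((a - q) + (b - q)), norm_nonneg ((a - q) - (b - q))]

lemma tangent {z t : ℂ} (h1 : ‖z - t‖ ≤ ‖t‖) (h2 : ‖z + t‖ ≤ ‖t‖) : z = 0 := by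
  have e1 := norm_sub_sq_real z t
  have e2 := norm_add_sq_real z t
  have h3 : ‖z‖ = 0 := by
    nlinarith [norm_nonneg z, norm_nonneg t, norm_nonneg (z - t), norm_nonneg (z + t), sq_nonneg ‖z‖]
  simpa using h3

lemma opp_sides : ∀ σ : Equiv.Perm (Fin 4),
    ∃ i j a : Fin 4,
      ((σ i = a ∧ σ (i+1) = a+1) ∨ (σ i = a+1 ∧ σ (i+1) = a)) ∧
      ((σ j = a+2 ∧ σ (j+1) = a+3) ∨ (σ j = a+3 ∧ σ (j+1) = a+2)) := by
  decide

lemma I_pow_mod (n : ℕ) : Complex.I ^ (n % 4) = Complex.I ^ n := by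
  conv_rhs => rw [← Nat.div_add_mod n 4]
  rw [pow_add, pow_mul, Complex.I_pow_four, one_pow, one_mul]

/-- For the four vertices of a square and any `α > π/2`, the `α`-lenses of the
edges of any Hamiltonian cycle on the vertices have empty intersection. -/
theorem square_no_hamiltonian_cycle_alpha_lens
    (c w : ℂ) (hw : w ≠ 0) (x : Fin 4 → ℂ)
    (hx : ∀ i : Fin 4, x i = c + w * Complex.I ^ (i : ℕ))
    (α : ℝ) (hα : π / 2 < α) (σ : Equiv.Perm (Fin 4)) :
    ¬ ∃ q : ℂ, ∀ i : Fin 4, q ∈ lensC α (x (σ i)) (x (σ (i + 1))) := by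
  rintro ⟨q, hq⟩
  obtain ⟨i, j, a, hi, hj⟩ := opp_sides σ
  set v : ℂ := w * Complex.I ^ (a : ℕ) with hv
  have hvne : v ≠ 0 := mul_ne_zero hw (pow_ne_zero _ Complex.I_ne_zero)
  have e0 : x a = c + v := hx a
  have ek : ∀ k : Fin 4, x (a + k) = c + v * Complex.I ^ (k : ℕ) := by
    intro k
    rw [hx, Fin.val_add, I_pow_mod, pow_add, hv]
    ring
  have e1 : x (a + 1) = c + Complex.I * v := by
    rw [ek 1, show ((1 : Fin 4) : ℕ) = 1 from rfl, pow_one]; ring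
  have e2 : x (a + 2) = c - v := by
    rw [ek 2, show ((2 : Fin 4) : ℕ) = 2 from rfl, Complex.I_sq]; ring
  have e3 : x (a + 3) = c - Complex.I * v := by
    rw [ek 3, show ((3 : Fin 4) : ℕ) = 3 from rfl,
      show Complex.I ^ 3 = -Complex.I by rw [pow_succ, Complex.I_sq]; ring]
    ring
  -- q belongs to the lenses of the two opposite sides
  have Hside : q ∈ lensC α (c + v) (c + Complex.I * v) := by
    rcases hi with ⟨ha, hb⟩ | ⟨ha, hb⟩
    · have := hq i; rwa [ha, hb, e0, e1] at this
    · have := hq i; rw [ha, hb, e0, e1] at this; rwa [lensC_comm] at this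
  have Hopp : q ∈ lensC α (c - v) (c - Complex.I * v) := by
    rcases hj with ⟨ha, hb⟩ | ⟨ha, hb⟩
    · have := hq j; rwa [ha, hb, e2, e3] at this
    · have := hq j; rw [ha, hb, e2, e3] at this; rwa [lensC_comm] at this
  -- hence q lies in the two tangent disks, so q = c
  have d1 := lensC_subset_disk hα.le Hside
  have d2 := lensC_subset_disk hα.le Hopp
  have hnorm : ‖v - Complex.I * v‖ = ‖v + Complex.I * v‖ := by
    rw [show v - Complex.I * v = (1 - Complex.I) * v by ring,
        show v + Complex.I * v = (1 + Complex.I) * v by ring,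
        norm_mul (1 - Complex.I) v, norm_mul (1 + Complex.I) v]
    have hs1 : ‖(1 - Complex.I)‖ = Real.sqrt 2 := by
      rw [Complex.norm_def, Complex.normSq_apply]
      norm_num
    have hs2 : ‖(1 + Complex.I)‖ = Real.sqrt 2 := by
      rw [Complex.norm_def, Complex.normSq_apply]
      norm_num
    rw [hs1, hs2]

  have d1' : ‖(2 * q - 2 * c) - (v + Complex.I * v)‖ ≤ ‖v + Complex.I * v‖ := by
    calc ‖(2 * q - 2 * c) - (v + Complex.I * v)‖
        = ‖2 * q - (c + v) - (c + Complex.I * v)‖ := by congr 1; ring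
      _ ≤ ‖(c + v) - (c + Complex.I * v)‖ := d1
      _ = ‖v - Complex.I * v‖ := by congr 1; ring
      _ = ‖v + Complex.I * v‖ := hnorm
  have d2' : ‖(2 * q - 2 * c) + (v + Complex.I * v)‖ ≤ ‖v + Complex.I * v‖ := by
    calc ‖(2 * q - 2 * c) + (v + Complex.I * v)‖
        = ‖2 * q - (c - v) - (c - Complex.I * v)‖ := by congr 1; ring
      _ ≤ ‖(c - v) - (c - Complex.I * v)‖ := d2
      _ = ‖-(v - Complex.I * v)‖ := by congr 1; ring
      _ = ‖v + Complex.I * v‖ := by rw [norm_neg, hnorm]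
  have hz : 2 * q - 2 * c = 0 := tangent d1' d2'
  have hqc : q = c := by linear_combination hz / 2
  rw [hqc] at Hside
  -- but the angle at the center is exactly π/2
  have hang : ∠ (c + v) c (c + Complex.I * v) = π / 2 := by
    rw [show (∠ (c + v) c (c + Complex.I * v)) =
        InnerProductGeometry.angle ((c + v) - c) ((c + Complex.I * v) - c) from rfl]
    rw [← InnerProductGeometry.inner_eq_zero_iff_angle_eq_pi_div_two]
    rw [show (c + v) - c = v by ring, show (c + Complex.I * v) - c = Complex.I * v by ring]
    rw [Complex.inner]
    simp [Complex.mul_re, Complex.mul_im]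
    ring
  rcases Hside with h | h | h
  · exact hvne (by linear_combination -h)
  · exact (mul_ne_zero Complex.I_ne_zero hvne) (by linear_combination -h)
  · rw [hang] at h; linarith
end

section
/- Any set of four points in the plane admits a Hamiltonian cycle that is a Tverberg graph: there is a cyclic ordering of the four points such that the four disks whose diameters are the consecutive pairs have a common point. -/
open Real

/-!
Four points in the plane are affinely dependent; order them as `u₀, …, u₃` so that the
coefficients `d₀ ≤ d₁ ≤ d₂ ≤ d₃` of a nontrivial affine dependence increase. Either one
coefficient is the only one of its strict sign, and the corresponding point `q` lies in the
convex hull of the other three, or `d₀ ≤ d₁ < 0 < d₂ ≤ d₃` and `q` is the crossing point of the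
segments `u₀u₁` and `u₂u₃`. By Thales, `q` lies in the disk with diameter `ab` as soon as
`⟪a - q, b - q⟫ ≤ 0`, so it suffices to arrange the vectors `wᵢ = uᵢ - q` in a cycle whose
consecutive inner products are nonpositive.
In the first case `q` is one of the points, so `0` may sit next to anything, and among three
vectors with `0` in their convex hull one makes a nonacute angle with the other two. In the
crossing case `w₁`, `w₃` are nonpositive multiples of `w₀`, `w₂`, and the sign of `⟪w₀, w₂⟫`
chooses between the cycles `0 1 2 3` and `0 1 3 2`.
-/

open scoped RealInnerProductSpace

theorem eq_neg_div_smul_of_smul_add_smul_eq_zero {K V : Type*} [Field K] [AddCommGroup V]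
    [Module K V] {a b : K} {x y : V} (hb : b ≠ 0) (h : a • x + b • y = 0) :
    y = (-(a / b)) • x := by
  rw [← inv_smul_smul₀ hb y, eq_neg_of_add_eq_zero_right h, smul_neg, smul_smul, neg_smul,
    inv_mul_eq_div]

section

variable {F : Type*} [NormedAddCommGroup F] [InnerProductSpace ℝ F]

theorem dist_midpoint_le_half_dist_of_inner_nonpos {a b q : F} (h : ⟪a - q, b - q⟫ ≤ 0) :
    dist q (midpoint ℝ a b) ≤ dist a b / 2 := by
  have apollonius :=
    EuclideanGeometry.dist_sq_add_dist_sq_eq_two_mul_dist_midpoint_sq_add_half_dist_sq q a b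
  have law_cos : dist a b ^ 2 = dist q a ^ 2 + dist q b ^ 2 - 2 * ⟪a - q, b - q⟫ := by
    rw [dist_comm q a, dist_comm q b, dist_eq_norm, dist_eq_norm, dist_eq_norm,
      ← sub_sub_sub_cancel_right a b q, norm_sub_sq_real]
    ring
  exact (pow_le_pow_iff_left₀ dist_nonneg (by positivity) two_ne_zero).mp (by nlinarith)

/-- The functional `⟪x, ·⟫` is positive on `x`, `y` and `z`, so it cannot vanish on a
convex combination of them. -/
theorem inner_nonpos_of_inner_pos {x y z : F} {a b c : ℝ} (ha : 0 ≤ a) (hb : 0 ≤ b)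
    (hc : 0 ≤ c) (habc : 0 < a + b + c) (h : a • x + b • y + c • z = 0) (hxy : 0 < ⟪x, y⟫) :
    ⟪x, z⟫ ≤ 0 := by
  by_contra! hxz
  have hxx : 0 < ⟪x, x⟫ := real_inner_self_pos.2 (by rintro rfl; simp at hxy)
  have hsum := congrArg (⟪x, ·⟫) h
  simp only [inner_add_right, real_inner_smul_right, inner_zero_right] at hsum
  have hterms : a * ⟪x, x⟫ = 0 ∧ b * ⟪x, y⟫ = 0 ∧ c * ⟪x, z⟫ = 0 := by
    refine ⟨?_, ?_, ?_⟩ <;>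
      nlinarith [mul_nonneg ha hxx.le, mul_nonneg hb hxy.le, mul_nonneg hc hxz.le]
  simp only [mul_eq_zero, hxx.ne', hxy.ne', hxz.ne', or_false] at hterms
  linarith [hterms.1, hterms.2.1, hterms.2.2]

def HasNonacuteCycle (w : Fin 4 → F) : Prop :=
  ∃ σ : Equiv.Perm (Fin 4), ∀ i, ⟪w (σ i), w (σ (i + 1))⟫ ≤ 0

namespace HasNonacuteCycle

variable {w : Fin 4 → F}

theorem of_comp (τ : Equiv.Perm (Fin 4)) (h : HasNonacuteCycle (w ∘ τ)) :
    HasNonacuteCycle w :=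
  let ⟨σ, hσ⟩ := h
  ⟨σ.trans τ, hσ⟩

theorem of_consecutive (h01 : ⟪w 0, w 1⟫ ≤ 0) (h12 : ⟪w 1, w 2⟫ ≤ 0) (h23 : ⟪w 2, w 3⟫ ≤ 0)
    (h30 : ⟪w 3, w 0⟫ ≤ 0) : HasNonacuteCycle w :=
  ⟨1, Fin.forall_fin_succ.2 ⟨h01, Fin.forall_fin_succ.2 ⟨h12, Fin.forall_fin_succ.2 ⟨h23,
    Fin.forall_fin_one.2 h30⟩⟩⟩⟩

theorem of_eq_zero (h0 : w 0 = 0) {a b c : ℝ} (ha : 0 ≤ a) (hb : 0 ≤ b) (hc : 0 ≤ c)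
    (habc : 0 < a + b + c) (h : a • w 1 + b • w 2 + c • w 3 = 0) : HasNonacuteCycle w := by
  have h0_left (x : F) : ⟪w 0, x⟫ ≤ 0 := by simp [h0]
  have h0_right (x : F) : ⟪x, w 0⟫ ≤ 0 := by simp [h0]
  by_cases h12 : 0 < ⟪w 1, w 2⟫
  · have h13 : ⟪w 1, w 3⟫ ≤ 0 := inner_nonpos_of_inner_pos ha hb hc habc h h12
    have h23 : ⟪w 2, w 3⟫ ≤ 0 :=
      inner_nonpos_of_inner_pos hb ha hc (by linarith) (by rw [← h]; abel)
        (by rwa [real_inner_comm])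
    exact of_comp (Equiv.swap 2 3)
      (of_consecutive (h0_left _) h13 (by rwa [real_inner_comm]) (h0_right _))
  by_cases h23 : 0 < ⟪w 2, w 3⟫
  · have h21 : ⟪w 2, w 1⟫ ≤ 0 :=
      inner_nonpos_of_inner_pos hb hc ha (by linarith) (by rw [← h]; abel) h23
    have h31 : ⟪w 3, w 1⟫ ≤ 0 :=
      inner_nonpos_of_inner_pos hc hb ha (by linarith) (by rw [← h]; abel)
        (by rwa [real_inner_comm])
    exact of_comp (Equiv.swap 1 2)
      (of_consecutive (h0_left _) h21 (by rwa [real_inner_comm]) (h0_right _))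
  exact of_consecutive (h0_left _) (not_lt.1 h12) (not_lt.1 h23) (h0_right _)

theorem of_eq_smul {s t : ℝ} (hs : s ≤ 0) (ht : t ≤ 0) (h1 : w 1 = s • w 0)
    (h3 : w 3 = t • w 2) : HasNonacuteCycle w := by
  have h01 : ⟪w 0, w 1⟫ ≤ 0 := by
    rw [h1, real_inner_smul_right]
    exact mul_nonpos_of_nonpos_of_nonneg hs real_inner_self_nonneg
  have h23 : ⟪w 2, w 3⟫ ≤ 0 := by
    rw [h3, real_inner_smul_right]
    exact mul_nonpos_of_nonpos_of_nonneg ht real_inner_self_nonneg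
  rcases le_total ⟪w 0, w 2⟫ 0 with h02 | h02
  · have h13 : ⟪w 1, w 3⟫ ≤ 0 := by
      rw [h1, h3, real_inner_smul_left, real_inner_smul_right, ← mul_assoc]
      exact mul_nonpos_of_nonneg_of_nonpos (mul_nonneg_of_nonpos_of_nonpos hs ht) h02
    exact of_comp (Equiv.swap 2 3)
      (of_consecutive h01 h13 (by rwa [real_inner_comm]) (by rwa [real_inner_comm]))
  · have h12 : ⟪w 1, w 2⟫ ≤ 0 := by
      rw [h1, real_inner_smul_left]
      exact mul_nonpos_of_nonpos_of_nonneg hs h02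
    have h30 : ⟪w 3, w 0⟫ ≤ 0 := by
      rw [h3, real_inner_smul_left, real_inner_comm]
      exact mul_nonpos_of_nonpos_of_nonneg ht h02
    exact of_consecutive h01 h12 h23 h30

end HasNonacuteCycle

open HasNonacuteCycle in
theorem exists_hasNonacuteCycle_sub_of_monotone {u : Fin 4 → F} {d : Fin 4 → ℝ}
    (hd : Monotone d) (hsum : ∑ i, d i = 0) (hcomb : ∑ i, d i • u i = 0) (hne : d ≠ 0) :
    ∃ q, HasNonacuteCycle (fun i => u i - q) := by
  have hcomb_sub (q : F) :
      d 0 • (u 0 - q) + d 1 • (u 1 - q) + d 2 • (u 2 - q) + d 3 • (u 3 - q) = 0 := by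
    rw [Fin.sum_univ_four] at hsum hcomb
    linear_combination (norm := module) hcomb - hsum • q
  have hd0 : d 0 < 0 := by
    by_contra! h
    have hnonneg : 0 ≤ d := fun i => h.trans (hd (Fin.zero_le i))
    exact hne ((Fintype.sum_eq_zero_iff_of_nonneg hnonneg).1 hsum)
  have hd12 : d 1 ≤ d 2 := hd (by decide)
  have hd23 : d 2 ≤ d 3 := hd (by decide)
  rcases le_or_gt 0 (d 1) with hd1 | hd1
  · refine ⟨u 0, of_eq_zero (sub_self _) hd1 (hd1.trans hd12) (hd1.trans (hd12.trans hd23))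
      (by linarith [Fin.sum_univ_four d ▸ hsum]) ?_⟩
    simpa using hcomb_sub (u 0)
  rcases le_or_gt (d 2) 0 with hd2 | hd2
  · refine ⟨u 3, of_comp (Equiv.swap 0 3) (of_eq_zero (a := -d 1) (b := -d 2) (c := -d 0)
      (sub_self _) (by linarith) (by linarith) (by linarith) (by linarith) ?_)⟩
    show (-d 1) • (u 1 - u 3) + (-d 2) • (u 2 - u 3) + (-d 0) • (u 0 - u 3) = 0
    linear_combination (norm := module) -hcomb_sub (u 3)
  set q := (d 0 + d 1)⁻¹ • (d 0 • u 0 + d 1 • u 1)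
  have hq01 : d 0 • (u 0 - q) + d 1 • (u 1 - q) = 0 := by
    have hq' : (d 0 + d 1) • q = d 0 • u 0 + d 1 • u 1 := smul_inv_smul₀ (by linarith) _
    linear_combination (norm := module) -hq'
  have hq23 : d 2 • (u 2 - q) + d 3 • (u 3 - q) = 0 := by
    linear_combination (norm := module) hcomb_sub q - hq01
  exact ⟨q, of_eq_smul (s := -(d 0 / d 1)) (t := -(d 2 / d 3))
    (neg_nonpos.2 (div_nonneg_of_nonpos hd0.le hd1.le))
    (neg_nonpos.2 (div_nonneg hd2.le (by linarith)))
    (eq_neg_div_smul_of_smul_add_smul_eq_zero hd1.ne hq01)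
    (eq_neg_div_smul_of_smul_add_smul_eq_zero (by linarith) hq23)⟩

theorem exists_hasNonacuteCycle_sub_of_not_affineIndependent {v : Fin 4 → F}
    (h : ¬ AffineIndependent ℝ v) : ∃ q, HasNonacuteCycle (fun i => v i - q) := by
  rw [affineIndependent_iff_of_fintype] at h
  push Not at h
  obtain ⟨c, hsum, hcomb, hne⟩ := h
  rw [Finset.weightedVSub_eq_linear_combination _ hsum] at hcomb
  set τ := Tuple.sort c
  obtain ⟨q, hq⟩ := exists_hasNonacuteCycle_sub_of_monotone (u := v ∘ τ) (d := c ∘ τ)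
    (Tuple.monotone_sort c) (by rwa [Function.comp_def, Equiv.sum_comp])
    (by simpa [Function.comp_def, Equiv.sum_comp τ (fun i => c i • v i)] using hcomb)
    (fun h0 => by obtain ⟨i, hi⟩ := hne; exact hi (by simpa using congrFun h0 (τ.symm i)))
  exact ⟨q, hq.of_comp τ⟩

end

theorem four_points_hamiltonian_cycle_tverberg_general
    (v : Fin 4 → EuclideanSpace ℝ (Fin 2)) :
    ∃ σ : Equiv.Perm (Fin 4), ∃ q,
      ∀ i : Fin 4, q ∈ diskD (v (σ i)) (v (σ (i + 1))) := by
  have hdep : ¬ AffineIndependent ℝ v := fun h => by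
    have hcard := h.card_le_finrank_succ
    have hspan := Submodule.finrank_le (vectorSpan ℝ (Set.range v))
    simp only [Fintype.card_fin, finrank_euclideanSpace_fin] at hcard hspan
    omega
  obtain ⟨q, σ, hσ⟩ := exists_hasNonacuteCycle_sub_of_not_affineIndependent hdep
  exact ⟨σ, q, fun i => dist_midpoint_le_half_dist_of_inner_nonpos (hσ i)⟩

/-- Any set of four points in the plane admits a Hamiltonian cycle that is a
Tverberg graph: the four disks spanned by consecutive pairs have a common point. -/
theorem four_points_hamiltonian_cycle_tverberg
    (v : Fin 4 → EuclideanSpace ℝ (Fin 2)) (hinj : Function.Injective v) :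
    ∃ σ : Equiv.Perm (Fin 4), ∃ q,
      ∀ i : Fin 4, q ∈ diskD (v (σ i)) (v (σ (i + 1))) :=
  four_points_hamiltonian_cycle_tverberg_general v
end

section
/- Let C be a circle with center p, and suppose three closed arcs A₁, A₂, A₃ of C each subtend an angle at p of at most π/2 and pairwise intersect. Then A₁ ∩ A₂ ∩ A₃ ≠ ∅. -/
open Real

lemma exp_shift' (t : ℝ) (k : ℤ) :
    Complex.exp (((t + 2*π*k : ℝ)) * Complex.I) = Complex.exp (t * Complex.I) := by
  push_cast
  rw [add_mul, Complex.exp_add]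
  have h1 : Complex.exp ((2*(π:ℂ)*k) * Complex.I) = 1 := by
    have := Complex.exp_int_mul_two_pi_mul_I k
    rw [← this]; ring_nf
  rw [h1, mul_one]

lemma exp_inj' {t s : ℝ} (h : Complex.exp ((t:ℂ)*Complex.I) = Complex.exp ((s:ℂ)*Complex.I)) :
    ∃ k : ℤ, t = s + 2*π*k := by
  rw [Complex.exp_eq_exp_iff_exists_int] at h
  obtain ⟨n, hn⟩ := h
  refine ⟨n, ?_⟩
  have h2 : ((t : ℝ) : ℂ) = ((s + 2*π*n : ℝ) : ℂ) := by
    push_cast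
    have := mul_right_cancel₀ Complex.I_ne_zero
      (by rw [hn]; ring : (t:ℂ)*Complex.I = ((s:ℂ) + 2*π*n)*Complex.I)
    exact this
  exact_mod_cast h2

/-- Three closed arcs on a circle, each subtending an angle at most `π/2` at the
center, that pairwise intersect have a common point. -/
theorem short_arcs_helly
    (p : ℂ) (R : ℝ) (hR : 0 < R) (a b : Fin 3 → ℝ)
    (hab : ∀ i, a i ≤ b i) (hlen : ∀ i, b i - a i ≤ π / 2)
    (A : Fin 3 → Set ℂ)
    (hA : ∀ i, A i = (fun t : ℝ => p + (R : ℂ) * Complex.exp (t * Complex.I)) ''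
      Set.Icc (a i) (b i))
    (hpair : ∀ i j, (A i ∩ A j).Nonempty) :
    (A 0 ∩ A 1 ∩ A 2).Nonempty := by
  have hRc : (R : ℂ) ≠ 0 := Complex.ofReal_ne_zero.mpr hR.ne'
  have hπ : 0 < π := Real.pi_pos
  have key : ∀ i j : Fin 3, ∃ t s : ℝ, ∃ k : ℤ,
      t ∈ Set.Icc (a i) (b i) ∧ s ∈ Set.Icc (a j) (b j) ∧ t = s + 2*π*k := by
    intro i j
    obtain ⟨z, hzi, hzj⟩ := hpair i j
    rw [hA i] at hzi; rw [hA j] at hzj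
    obtain ⟨t, ht, hzt⟩ := hzi
    obtain ⟨s, hs, hzs⟩ := hzj
    have hexp : Complex.exp ((t:ℂ)*Complex.I) = Complex.exp ((s:ℂ)*Complex.I) := by
      have h := hzt.trans hzs.symm
      simp only at h
      exact mul_left_cancel₀ hRc (add_left_cancel h)
    obtain ⟨k, hk⟩ := exp_inj' hexp
    exact ⟨t, s, k, ht, hs, hk⟩
  obtain ⟨t1, s1, k1, ht1, hs1, hk1⟩ := key 0 1
  obtain ⟨t2, s2, k2, ht2, hs2, hk2⟩ := key 0 2
  obtain ⟨u, v, m, hu, hv, huv⟩ := key 1 2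
  -- shifted endpoints
  set a1' : ℝ := a 1 + 2*π*k1 with ha1'
  set b1' : ℝ := b 1 + 2*π*k1 with hb1'
  set a2' : ℝ := a 2 + 2*π*k2 with ha2'
  set b2' : ℝ := b 2 + 2*π*k2 with hb2'
  obtain ⟨ht1l, ht1r⟩ := ht1
  obtain ⟨hs1l, hs1r⟩ := hs1
  obtain ⟨ht2l, ht2r⟩ := ht2
  obtain ⟨hs2l, hs2r⟩ := hs2
  obtain ⟨hul, hur⟩ := hu
  obtain ⟨hvl, hvr⟩ := hv
  have hl0 := hlen 0
  have hl1 := hlen 1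
  have hl2 := hlen 2
  -- t1 ∈ [a0,b0] ∩ [a1',b1'], t2 ∈ [a0,b0] ∩ [a2',b2']
  have ht1a : a1' ≤ t1 := by rw [ha1', hk1]; linarith
  have ht1b : t1 ≤ b1' := by rw [hb1', hk1]; linarith
  have ht2a : a2' ≤ t2 := by rw [ha2', hk2]; linarith
  have ht2b : t2 ≤ b2' := by rw [hb2', hk2]; linarith
  -- u' := u + 2πk1 ∈ [a1', b1'], v' := v + 2πk2 ∈ [a2', b2']
  set u' : ℝ := u + 2*π*k1 with hu'
  set v' : ℝ := v + 2*π*k2 with hv'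
  have hu'a : a1' ≤ u' := by rw [ha1', hu']; linarith
  have hu'b : u' ≤ b1' := by rw [hb1', hu']; linarith
  have hv'a : a2' ≤ v' := by rw [ha2', hv']; linarith
  have hv'b : v' ≤ b2' := by rw [hb2', hv']; linarith
  -- both u' and v' lie in [a0 - π/2, b0 + π/2]
  have hu'lo : a 0 - π/2 ≤ u' := by
    have : b1' - a1' = b 1 - a 1 := by rw [ha1', hb1']; ring
    linarith
  have hu'hi : u' ≤ b 0 + π/2 := by
    have : b1' - a1' = b 1 - a 1 := by rw [ha1', hb1']; ring
    linarith
  have hv'lo : a 0 - π/2 ≤ v' := by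
    have : b2' - a2' = b 2 - a 2 := by rw [ha2', hb2']; ring
    linarith
  have hv'hi : v' ≤ b 0 + π/2 := by
    have : b2' - a2' = b 2 - a 2 := by rw [ha2', hb2']; ring
    linarith
  -- u' - v' = 2π N with N = m + k1 - k2 ; conclude N = 0 so u' = v'
  have hdiff : u' - v' = 2*π*((m + k1 - k2 : ℤ) : ℝ) := by
    rw [hu', hv', huv]; push_cast; ring
  have hNzero : ((m + k1 - k2 : ℤ) : ℝ) = 0 := by
    set N : ℝ := ((m + k1 - k2 : ℤ) : ℝ) with hN
    have hb1 : 2*π*N < 2*π*1 := by linarith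
    have hb2 : 2*π*(-1) < 2*π*N := by linarith
    have h2pi : (0:ℝ) < 2*π := by linarith
    have hlt1 : N < 1 := lt_of_mul_lt_mul_left (by linarith) (le_of_lt h2pi)
    have hgt1 : -1 < N := lt_of_mul_lt_mul_left (by linarith) (le_of_lt h2pi)
    have : m + k1 - k2 = 0 := by
      have h1' : ((m + k1 - k2 : ℤ) : ℝ) < 1 := hlt1
      have h2' : (-1 : ℝ) < ((m + k1 - k2 : ℤ) : ℝ) := hgt1
      have h1'' : (m + k1 - k2 : ℤ) < 1 := by exact_mod_cast h1'
      have h2'' : (-1 : ℤ) < (m + k1 - k2 : ℤ) := by exact_mod_cast h2'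
      omega
    rw [hN, this]; norm_num
  have huv' : u' = v' := by
    have := hdiff
    rw [hNzero] at this
    linarith
  -- 1-D Helly: M = max of left endpoints lies in all three intervals
  set M : ℝ := max (max (a 0) a1') a2' with hM
  have hM0 : a 0 ≤ M := le_trans (le_max_left _ _) (le_max_left _ _)
  have hM1 : a1' ≤ M := le_trans (le_max_right _ _) (le_max_left _ _)
  have hM2 : a2' ≤ M := le_max_right _ _
  have hMb0 : M ≤ b 0 := by
    rw [hM]
    apply max_le (max_le (hab 0) (by linarith)) (by linarith)
  have hMb1 : M ≤ b1' := by
    rw [hM]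
    apply max_le (max_le (by linarith) (by linarith)) (by linarith)
  have hMb2 : M ≤ b2' := by
    rw [hM]
    apply max_le (max_le (by linarith) (by linarith)) (by linarith)
  -- the common point
  refine ⟨p + (R : ℂ) * Complex.exp ((M : ℝ) * Complex.I), ⟨?_, ?_⟩, ?_⟩
  · rw [hA 0]
    exact ⟨M, ⟨hM0, hMb0⟩, rfl⟩
  · rw [hA 1]
    refine ⟨M - 2*π*k1, ⟨by rw [ha1'] at hM1; linarith, by rw [hb1'] at hMb1; linarith⟩, ?_⟩
    show p + (R:ℂ) * Complex.exp ((M - 2*π*k1 : ℝ) * Complex.I) = _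
    have := exp_shift' (M - 2*π*k1) k1
    rw [show (M - 2*π*k1 + 2*π*k1 : ℝ) = M by ring] at this
    rw [this]
  · rw [hA 2]
    refine ⟨M - 2*π*k2, ⟨by rw [ha2'] at hM2; linarith, by rw [hb2'] at hMb2; linarith⟩, ?_⟩
    show p + (R:ℂ) * Complex.exp ((M - 2*π*k2 : ℝ) * Complex.I) = _
    have := exp_shift' (M - 2*π*k2) k2
    rw [show (M - 2*π*k2 + 2*π*k2 : ℝ) = M by ring] at this
    rw [this]
end

section
/- Let S be a set of 2r points in the plane. Then there exists a Hamiltonian path with vertex set S such that the closed disks whose diameters are the edges of the path have a common point. -/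
open Real List

section Aux

local notation "E" => EuclideanSpace ℝ (Fin 2)

noncomputable def vec2 (a b : ℝ) : E := WithLp.toLp 2 ![a, b]

lemma aux_mem_diskD {q a b : E} (h : (inner ℝ (a - q) (b - q) : ℝ) ≤ 0) :
    q ∈ diskD a b := by
  have h3 : (inner ℝ (q - a) (q - b) : ℝ) = inner ℝ (a - q) (b - q) := by
    rw [← neg_sub a q, ← neg_sub b q, inner_neg_neg]
  have key : ‖(q - a) + (q - b)‖ ≤ ‖(q - a) - (q - b)‖ := by
    nlinarith [norm_add_sq_real (q - a) (q - b), norm_sub_sq_real (q - a) (q - b),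
      norm_nonneg ((q - a) + (q - b)), norm_nonneg ((q - a) - (q - b)), h3, h]
  have hmid : q - midpoint ℝ a b = (2⁻¹ : ℝ) • ((q - a) + (q - b)) := by
    rw [midpoint_eq_smul_add, invOf_eq_inv]
    module
  have hab2 : ‖a - b‖ = ‖(q - a) - (q - b)‖ := by
    have h5 : a - b = -((q - a) - (q - b)) := by abel
    rw [h5, norm_neg]
  show dist q (midpoint ℝ a b) ≤ dist a b / 2
  rw [dist_eq_norm, dist_eq_norm, hmid, norm_smul, hab2]
  have h4 : ‖(2⁻¹ : ℝ)‖ = 2⁻¹ := by norm_num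
  rw [h4]
  linarith

/-- Interleave two lists: `_root_.interleave [a,b] [c,d] = [a,c,b,d]`. -/
def interleave {α : Type*} : List α → List α → List α
  | [], l => l
  | a :: as, l => a :: interleave l as
termination_by a b => a.length + b.length

lemma interleave_nil {α : Type*} (l : List α) : _root_.interleave [] l = l := by
  simp [_root_.interleave]

lemma interleave_cons {α : Type*} (a : α) (as l : List α) :
    _root_.interleave (a :: as) l = a :: _root_.interleave l as := by
  simp [_root_.interleave]

lemma interleave_perm {α : Type*} : ∀ (as bs : List α), _root_.interleave as bs ~ as ++ bs
  | [], bs => by simp [_root_.interleave_nil]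
  | a :: as, bs => by
    rw [interleave_cons]
    exact ((interleave_perm bs as).cons a).trans ((List.perm_append_comm).cons a)
termination_by as bs => as.length + bs.length

lemma chain'_interleave {α : Type*} (G : α → α → Prop) :
    ∀ (as bs : List α), bs.length ≤ as.length → as.length ≤ bs.length + 1 →
    (∀ a ∈ as, ∀ b ∈ bs, G a b) → (∀ b ∈ bs, ∀ a ∈ as, G b a) →
    List.IsChain G (_root_.interleave as bs)
  | [], bs, h1, _, _, _ => by
    have hbs : bs = [] := List.length_eq_zero_iff.mp (Nat.le_zero.mp h1)
    subst hbs
    simp [_root_.interleave_nil]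
  | a :: as, bs, h1, h2, hab, hba => by
    rw [interleave_cons, List.isChain_cons]
    constructor
    · intro y hy
      match bs with
      | [] =>
        have has : as = [] := by
          simp only [List.length_cons, List.length_nil] at h2
          exact List.length_eq_zero_iff.mp (by omega)
        subst has
        simp [_root_.interleave_nil] at hy
      | b :: bs =>
        rw [interleave_cons] at hy
        have hyb : b = y := by simpa using hy
        subst hyb
        exact hab a (by simp) b (by simp)
    · apply chain'_interleave G bs as
      · simp only [List.length_cons] at h2; omega
      · simp only [List.length_cons] at h1; omega
      · intro b hb a' ha'; exact hba b hb a' (by simp [ha'])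
      · intro a' ha' b hb; exact hab a' (by simp [ha']) b hb
termination_by as bs => as.length + bs.length

lemma head_mem_interleave {α : Type*} (as bs : List α) (x : α)
    (hx : x ∈ (_root_.interleave as bs).head?) (hne : as ≠ []) : x ∈ as := by
  match as with
  | [] => exact absurd rfl hne
  | a :: as =>
    rw [interleave_cons] at hx
    have hxa : a = x := by simpa using hx
    subst hxa
    simp

/-- abstract construction of the chain -/
lemma exists_chain {α : Type*} (G : α → α → Prop) (hG : ∀ a b, G a b → G b a)
    (p : α) (Small Big : List α) (P : α → Bool)
    (hlen : Big.length = Small.length + 1)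
    (hcount : Small.countP P + Big.countP P = Big.length)
    (h13 : ∀ a ∈ Small, P a = true → ∀ b ∈ Big, ¬(P b = true) → G a b)
    (h42 : ∀ a ∈ Big, P a = true → ∀ b ∈ Small, ¬(P b = true) → G a b)
    (hp : ∀ b ∈ Big, G p b) :
    ∃ l : List α, l ~ p :: (Small ++ Big) ∧ List.IsChain G l := by
  set Q1 := Small.filter P with hQ1
  set Q2 := Small.filter (fun x => !P x) with hQ2
  set Q3 := Big.filter (fun x => !P x) with hQ3
  set Q4 := Big.filter P with hQ4
  have hmQ1 : ∀ a ∈ Q1, a ∈ Small ∧ P a = true := by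
    intro a ha; rw [hQ1, List.mem_filter] at ha; exact ha
  have hmQ2 : ∀ a ∈ Q2, a ∈ Small ∧ ¬(P a = true) := by
    intro a ha; rw [hQ2, List.mem_filter] at ha; simpa using ha
  have hmQ3 : ∀ a ∈ Q3, a ∈ Big ∧ ¬(P a = true) := by
    intro a ha; rw [hQ3, List.mem_filter] at ha; simpa using ha
  have hmQ4 : ∀ a ∈ Q4, a ∈ Big ∧ P a = true := by
    intro a ha; rw [hQ4, List.mem_filter] at ha; exact ha
  have hpS : Q1 ++ Q2 ~ Small := List.filter_append_perm P Small
  have hpB : Q4 ++ Q3 ~ Big := List.filter_append_perm P Big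
  have hlen1 : Q1.length = Small.countP P := (List.countP_eq_length_filter (p := P) (l := Small)).symm
  have hlen4 : Q4.length = Big.countP P := (List.countP_eq_length_filter (p := P) (l := Big)).symm
  have hlen12 : Q1.length + Q2.length = Small.length := by
    have := hpS.length_eq; simpa using this
  have hlen43 : Q4.length + Q3.length = Big.length := by
    have := hpB.length_eq; simpa using this
  have h31 : Q3.length = Q1.length := by omega
  have h421 : Q4.length = Q2.length + 1 := by omega
  refine ⟨(_root_.interleave Q3 Q1).reverse ++ p :: _root_.interleave Q4 Q2, ?_, ?_⟩
  · have h1 : (_root_.interleave Q3 Q1).reverse ~ Q3 ++ Q1 :=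
      ((_root_.interleave Q3 Q1).reverse_perm).trans (interleave_perm _ _)
    have h2 : _root_.interleave Q4 Q2 ~ Q4 ++ Q2 := interleave_perm _ _
    calc (_root_.interleave Q3 Q1).reverse ++ p :: _root_.interleave Q4 Q2
        ~ (Q3 ++ Q1) ++ p :: (Q4 ++ Q2) := h1.append (h2.cons p)
      _ ~ p :: ((Q3 ++ Q1) ++ (Q4 ++ Q2)) := List.perm_middle
      _ ~ p :: (Small ++ Big) := by
          refine List.Perm.cons p ?_
          rw [← Multiset.coe_eq_coe] at hpS hpB ⊢
          simp only [← Multiset.coe_add] at hpS hpB ⊢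
          rw [← hpS, ← hpB]
          abel
  · rw [List.isChain_append]
    refine ⟨?_, ?_, ?_⟩
    · rw [List.isChain_reverse]
      apply chain'_interleave
      · omega
      · omega
      · intro a ha b hb
        exact h13 b (hmQ1 b hb).1 (hmQ1 b hb).2 a (hmQ3 a ha).1 (hmQ3 a ha).2
      · intro b hb a ha
        exact hG _ _ (h13 b (hmQ1 b hb).1 (hmQ1 b hb).2 a (hmQ3 a ha).1 (hmQ3 a ha).2)
    · rw [List.isChain_cons]
      constructor
      · intro y hy
        have hQ4ne : Q4 ≠ [] := by
          intro h; rw [h] at h421; simp at h421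
        have hmem := head_mem_interleave Q4 Q2 y hy hQ4ne
        exact hp y (hmQ4 y hmem).1
      · apply chain'_interleave
        · omega
        · omega
        · intro a ha b hb
          exact h42 a (hmQ4 a ha).1 (hmQ4 a ha).2 b (hmQ2 b hb).1 (hmQ2 b hb).2
        · intro b hb a ha
          exact hG _ _ (h42 a (hmQ4 a ha).1 (hmQ4 a ha).2 b (hmQ2 b hb).1 (hmQ2 b hb).2)
    · intro x hx y hy
      rw [List.getLast?_reverse] at hx
      have hyp : p = y := by simpa using hy
      subst hyp
      have hQ3ne : Q3 ≠ [] := by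
        intro hnil
        rw [hnil, _root_.interleave_nil] at hx
        have hQ1nil : Q1 = [] := by
          apply List.length_eq_zero_iff.mp; rw [← h31, hnil]; simp
        rw [hQ1nil] at hx; simp at hx
      have hmem := head_mem_interleave Q3 Q1 x hx hQ3ne
      exact hG _ _ (hp x (hmQ3 x hmem).1)

/-- facts from a sorted split -/
lemma sorted_split {α : Type*} (key : α → ℝ) {l : List α}
    (hs : l.Pairwise (fun a b => key a ≤ key b)) {k : ℕ} (hk : k < l.length) :
    l = l.take k ++ l[k] :: l.drop (k + 1)
    ∧ (∀ a ∈ l.take k, key a ≤ key l[k])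
    ∧ (∀ b ∈ l.drop (k + 1), key l[k] ≤ key b) := by
  have hdrop : l.drop k = l[k] :: l.drop (k + 1) := List.drop_eq_getElem_cons hk
  have htake : l.take (k + 1) = l.take k ++ [l[k]] := by
    rw [List.take_succ]
    simp [List.getElem?_eq_getElem hk]
  have heq : l = l.take k ++ l[k] :: l.drop (k + 1) := by
    conv_lhs => rw [← List.take_append_drop k l, hdrop]
  refine ⟨heq, ?_, ?_⟩
  · have h1 : (l.take k ++ l.drop k).Pairwise (fun a b => key a ≤ key b) := by
      rwa [List.take_append_drop]
    have h2 := (List.pairwise_append.mp h1).2.2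
    intro a ha
    exact h2 a ha l[k] (by rw [hdrop]; exact List.mem_cons_self)
  · have h1 : (l.take (k + 1) ++ l.drop (k + 1)).Pairwise (fun a b => key a ≤ key b) := by
      rwa [List.take_append_drop]
    have h2 := (List.pairwise_append.mp h1).2.2
    intro b hb
    exact h2 l[k] (by rw [htake]; exact List.mem_append_right _ (by simp)) b hb

lemma vec2_inner_nonpos (α β : ℝ) (u v : E)
    (hx : (u 0 - α) * (v 0 - α) ≤ 0) (hy : (u 1 - β) * (v 1 - β) ≤ 0) :
    (inner ℝ (u - vec2 α β) (v - vec2 α β) : ℝ) ≤ 0 := by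
  have hcalc : (inner ℝ (u - vec2 α β) (v - vec2 α β) : ℝ)
      = (u 0 - α) * (v 0 - α) + (u 1 - β) * (v 1 - β) := by
    simp [PiLp.inner_apply, Fin.sum_univ_two]
    simp [vec2]; ring
  rw [hcalc]
  linarith

/-- the final combinatorial step -/
lemma final_step (r : ℕ) (S : Finset E)
    (l1 L' R : List E) (p : E)
    (heq1 : l1 = L' ++ p :: R) (hl1 : l1 ~ S.toList)
    (hL' : ∀ a ∈ L', a 0 ≤ p 0) (hR : ∀ b ∈ R, p 0 ≤ b 0)
    (β : ℝ) (Small Big : List E)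
    (hperm : Small ++ Big ~ L' ++ R)
    (hlenB : Big.length = Small.length + 1)
    (hBR : Big.length = R.length)
    (hySB : ∀ a ∈ Small, ∀ b ∈ Big, (a 1 - β) * (b 1 - β) ≤ 0)
    (hyPB : ∀ b ∈ Big, (p 1 - β) * (b 1 - β) ≤ 0) :
    ∃ (q : E) (l : List E), l ~ S.toList ∧
      List.IsChain (fun a b => (inner ℝ (a - q) (b - q) : ℝ) ≤ 0) l := by
  classical
  have hnd : l1.Nodup := hl1.nodup_iff.mpr S.nodup_toList
  have hdisj : ∀ a ∈ L', a ∉ R := by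
    rw [heq1] at hnd
    intro a ha har
    exact (List.disjoint_of_nodup_append hnd) ha (by simp [har])
  set P : E → Bool := fun c => decide (c ∈ R) with hP
  have hPiff : ∀ c, P c = true ↔ c ∈ R := by intro c; simp [hP]
  have hmem : ∀ c, c ∈ Small ∨ c ∈ Big → c ∈ L' ∨ c ∈ R := by
    intro c hc
    have hc2 : c ∈ Small ++ Big := by
      rcases hc with h | h
      · exact List.mem_append_left _ h
      · exact List.mem_append_right _ h
    exact List.mem_append.mp (hperm.mem_iff.mp hc2)
  have hcount : Small.countP P + Big.countP P = Big.length := by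
    have h1 : (Small ++ Big).countP P = (L' ++ R).countP P := hperm.countP_eq P
    rw [List.countP_append, List.countP_append] at h1
    have h2 : L'.countP P = 0 := by
      rw [List.countP_eq_zero]
      intro a ha
      simp only [hPiff]
      exact hdisj a ha
    have h3 : R.countP P = R.length := by
      rw [List.countP_eq_length]
      intro a ha
      exact (hPiff a).mpr ha
    omega
  have hGsymm : ∀ a b : E,
      (inner ℝ (a - vec2 (p 0) β) (b - vec2 (p 0) β) : ℝ) ≤ 0 →
      (inner ℝ (b - vec2 (p 0) β) (a - vec2 (p 0) β) : ℝ) ≤ 0 := by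
    intro a b h; rwa [real_inner_comm]
  obtain ⟨l, hlp, hlc⟩ := exists_chain
    (fun a b => (inner ℝ (a - vec2 (p 0) β) (b - vec2 (p 0) β) : ℝ) ≤ 0)
    hGsymm p Small Big P hlenB hcount
    (by
      intro a ha hPa b hb hPb
      have haR : a ∈ R := (hPiff a).mp hPa
      have hbL : b ∈ L' := by
        rcases hmem b (Or.inr hb) with h | h
        · exact h
        · exact absurd ((hPiff b).mpr h) hPb
      apply vec2_inner_nonpos
      · exact mul_nonpos_of_nonneg_of_nonpos (by linarith [hR a haR]) (by linarith [hL' b hbL])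
      · exact hySB a ha b hb)
    (by
      intro a ha hPa b hb hPb
      have haR : a ∈ R := (hPiff a).mp hPa
      have hbL : b ∈ L' := by
        rcases hmem b (Or.inl hb) with h | h
        · exact h
        · exact absurd ((hPiff b).mpr h) hPb
      apply vec2_inner_nonpos
      · exact mul_nonpos_of_nonneg_of_nonpos (by linarith [hR a haR]) (by linarith [hL' b hbL])
      · nlinarith [hySB b hb a ha])
    (by
      intro b hb
      apply vec2_inner_nonpos
      · have h0 : p 0 - p 0 = 0 := by ring
        rw [h0, zero_mul]
      · exact hyPB b hb)
  refine ⟨vec2 (p 0) β, l, ?_, hlc⟩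
  calc l ~ p :: (Small ++ Big) := hlp
    _ ~ p :: (L' ++ R) := hperm.cons p
    _ ~ L' ++ p :: R := List.perm_middle.symm
    _ = l1 := heq1.symm
    _ ~ S.toList := hl1

end Aux

section Main

local notation "E" => EuclideanSpace ℝ (Fin 2)

lemma pairwise_sort (key : E → ℝ) (l : List E) :
    (l.mergeSort (fun a b => decide (key a ≤ key b))).Pairwise
      (fun a b => key a ≤ key b) := by
  have h := List.pairwise_mergeSort (le := fun a b : E => decide (key a ≤ key b))
    (fun a b c h1 h2 => by
      simp only [decide_eq_true_eq] at *
      exact le_trans h1 h2)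
    (fun a b => by simpa using le_total (key a) (key b)) l
  exact h.imp (fun h => by simpa using h)

/-- Any set of `2r` points in the plane admits a Hamiltonian path whose
edge-diameter disks have a common point. -/
theorem even_points_hamiltonian_path_tverberg
    (r : ℕ) (S : Finset (EuclideanSpace ℝ (Fin 2))) (hcard : S.card = 2 * r) :
    ∃ x : Fin (2 * r) → EuclideanSpace ℝ (Fin 2),
      Function.Injective x ∧
      Set.range x = (S : Set (EuclideanSpace ℝ (Fin 2))) ∧
      ∃ q, ∀ (i : ℕ) (h : i + 1 < 2 * r),
        q ∈ diskD (x ⟨i, by omega⟩) (x ⟨i + 1, h⟩) := by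
  classical
  suffices h : ∃ (q : E) (l : List E), l ~ S.toList ∧
      List.IsChain (fun a b => (inner ℝ (a - q) (b - q) : ℝ) ≤ 0) l by
    obtain ⟨q, l, hperm, hchain⟩ := h
    have hlen : l.length = 2 * r := by rw [hperm.length_eq, Finset.length_toList, hcard]
    have hnd : l.Nodup := hperm.nodup_iff.mpr S.nodup_toList
    refine ⟨fun i => l.get (Fin.cast hlen.symm i), ?_, ?_, q, ?_⟩
    · exact (List.nodup_iff_injective_get.mp hnd).comp (Fin.cast_injective _)
    · ext a
      simp only [Set.mem_range]
      constructor
      · rintro ⟨i, rfl⟩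
        have hmem : l.get (Fin.cast hlen.symm i) ∈ l := by
          rw [List.get_eq_getElem]; exact List.getElem_mem _
        exact Finset.mem_coe.mpr (Finset.mem_toList.mp (hperm.mem_iff.mp hmem))
      · intro ha
        have hmem : a ∈ l := hperm.mem_iff.mpr (Finset.mem_toList.mpr ha)
        obtain ⟨n, hn⟩ := List.mem_iff_get.mp hmem
        exact ⟨Fin.cast hlen n, hn⟩
    · intro i hi
      have hc := List.isChain_iff_getElem.mp hchain i (by omega)
      exact aux_mem_diskD hc
  rcases Nat.eq_zero_or_pos r with hr0 | hr
  · refine ⟨0, [], ?_, List.isChain_nil⟩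
    have hS : S = ∅ := Finset.card_eq_zero.mp (by omega)
    simp [hS]
  · -- first sort: by x-coordinate
    have hl1p : S.toList.mergeSort (fun a b => decide (a 0 ≤ b 0)) ~ S.toList :=
      List.mergeSort_perm _ _
    set l1 : List E := S.toList.mergeSort (fun a b => decide (a 0 ≤ b 0)) with hl1def
    have hl1s : l1.Pairwise (fun a b : E => a 0 ≤ b 0) := pairwise_sort (fun c => c 0) _
    have hlen1 : l1.length = 2 * r := by rw [hl1p.length_eq, Finset.length_toList, hcard]
    have hk1 : r - 1 < l1.length := by omega
    obtain ⟨heq1, hL', hR⟩ := sorted_split (fun c => c 0) hl1s hk1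
    have hL'len : (l1.take (r - 1)).length = r - 1 := by
      rw [List.length_take]; omega
    have hRlen : (l1.drop (r - 1 + 1)).length = r := by
      rw [List.length_drop]; omega
    -- second sort: by y-coordinate
    have hl2p : (l1.take (r - 1) ++ l1.drop (r - 1 + 1)).mergeSort
        (fun a b => decide (a 1 ≤ b 1)) ~ l1.take (r - 1) ++ l1.drop (r - 1 + 1) :=
      List.mergeSort_perm _ _
    set l2 : List E := (l1.take (r - 1) ++ l1.drop (r - 1 + 1)).mergeSort
      (fun a b => decide (a 1 ≤ b 1)) with hl2def
    have hl2s : l2.Pairwise (fun a b : E => a 1 ≤ b 1) := pairwise_sort (fun c => c 1) _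
    have hlen2 : l2.length = 2 * r - 1 := by
      rw [hl2p.length_eq, List.length_append, hL'len, hRlen]; omega
    have hk2 : r - 1 < l2.length := by omega
    obtain ⟨heq2, hB', hT'⟩ := sorted_split (fun c => c 1) hl2s hk2
    have hB'len : (l2.take (r - 1)).length = r - 1 := by
      rw [List.length_take]; omega
    have hT'len : (l2.drop (r - 1 + 1)).length = r - 1 := by
      rw [List.length_drop]; omega
    rcases le_total ((l1[r - 1]'hk1) 1) ((l2[r - 1]'hk2) 1) with hp1 | hp1
    · -- p in bottom half : Small := B', Big := m :: T'
      apply final_step r S l1 (l1.take (r - 1)) (l1.drop (r - 1 + 1)) (l1[r - 1]'hk1)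
        heq1 hl1p hL' hR ((l2[r - 1]'hk2) 1) (l2.take (r - 1))
        ((l2[r - 1]'hk2) :: l2.drop (r - 1 + 1))
      · exact heq2 ▸ hl2p
      · rw [List.length_cons, hT'len, hB'len]
      · simp only [List.length_cons, hT'len, hRlen]; omega
      · intro a ha b hb
        have ha1 : a 1 ≤ (l2[r - 1]'hk2) 1 := hB' a ha
        have hb1 : (l2[r - 1]'hk2) 1 ≤ b 1 := by
          rcases List.mem_cons.mp hb with rfl | hbm
          · exact le_refl _
          · exact hT' b hbm
        exact mul_nonpos_of_nonpos_of_nonneg (by linarith) (by linarith)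
      · intro b hb
        have hb1 : (l2[r - 1]'hk2) 1 ≤ b 1 := by
          rcases List.mem_cons.mp hb with rfl | hbm
          · exact le_refl _
          · exact hT' b hbm
        exact mul_nonpos_of_nonpos_of_nonneg (by linarith) (by linarith)
    · -- p in top half : Small := T', Big := B' ++ [m]
      apply final_step r S l1 (l1.take (r - 1)) (l1.drop (r - 1 + 1)) (l1[r - 1]'hk1)
        heq1 hl1p hL' hR ((l2[r - 1]'hk2) 1) (l2.drop (r - 1 + 1))
        (l2.take (r - 1) ++ [l2[r - 1]'hk2])
      · calc l2.drop (r - 1 + 1) ++ (l2.take (r - 1) ++ [l2[r - 1]'hk2])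
            ~ (l2.take (r - 1) ++ [l2[r - 1]'hk2]) ++ l2.drop (r - 1 + 1) :=
              List.perm_append_comm
          _ = l2.take (r - 1) ++ (l2[r - 1]'hk2) :: l2.drop (r - 1 + 1) := by
              rw [List.append_assoc]; rfl
          _ = l2 := heq2.symm
          _ ~ _ := hl2p
      · rw [List.length_append, hB'len, hT'len, List.length_singleton]
      · simp only [List.length_append, List.length_singleton, hB'len, hRlen]; omega
      · intro a ha b hb
        have ha1 : (l2[r - 1]'hk2) 1 ≤ a 1 := hT' a ha
        have hb1 : b 1 ≤ (l2[r - 1]'hk2) 1 := by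
          rcases List.mem_append.mp hb with hbm | hbm
          · exact hB' b hbm
          · rw [List.mem_singleton.mp hbm]
        exact mul_nonpos_of_nonneg_of_nonpos (by linarith) (by linarith)
      · intro b hb
        have hb1 : b 1 ≤ (l2[r - 1]'hk2) 1 := by
          rcases List.mem_append.mp hb with hbm | hbm
          · exact hB' b hbm
          · rw [List.mem_singleton.mp hbm]
        exact mul_nonpos_of_nonneg_of_nonpos (by linarith) (by linarith)

end Main
end

section
/- Let S be a set of 2r points in the plane. Then there exists a perfect matching M of S such that the r closed disks with diameters the edges of M have a common point. -/
open Real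

private lemma dist_sq_eq (x y : EuclideanSpace ℝ (Fin 2)) :
    dist x y ^ 2 = (x 0 - y 0) ^ 2 + (x 1 - y 1) ^ 2 := by
  rw [EuclideanSpace.dist_eq, Real.sq_sqrt (by positivity)]
  simp [Fin.sum_univ_two, Real.dist_eq, sq_abs]

private lemma midpoint_coord (a b : EuclideanSpace ℝ (Fin 2)) (i : Fin 2) :
    midpoint ℝ a b i = (a i + b i) / 2 := by
  rw [midpoint_eq_smul_add]
  rw [show ((⅟2 : ℝ) • (a + b)) i = (⅟2 : ℝ) * ((a i) + (b i)) from rfl]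
  rw [invOf_eq_inv]
  ring

set_option maxHeartbeats 1000000 in
/-- Core chord-overlap inequality. -/
private lemma core_overlap (a0 a1 b0 b1 c0 c1 d0 d1 t hi hj : ℝ)
    (ha : a0 ≤ t) (hb : t ≤ b0) (hc : c0 ≤ t) (hd : t ≤ d0)
    (hsw : (a0 - c0) * (b0 - d0) + (a1 - c1) * (b1 - d1) ≤ 0)
    (hhi : 0 ≤ hi) (hhj : 0 ≤ hj)
    (hi2 : hi ^ 2 = ((a0 - b0) ^ 2 + (a1 - b1) ^ 2) / 4 - (t - (a0 + b0) / 2) ^ 2)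
    (hj2 : hj ^ 2 = ((c0 - d0) ^ 2 + (c1 - d1) ^ 2) / 4 - (t - (c0 + d0) / 2) ^ 2) :
    (a1 + b1) / 2 - (c1 + d1) / 2 ≤ hi + hj := by
  -- abbreviations
  have e1 : 4 * hi ^ 2 = (a0 - b0) ^ 2 + (a1 - b1) ^ 2 - (a0 + b0 - 2 * t) ^ 2 := by
    rw [hi2]; ring
  have e2 : 4 * hj ^ 2 = (c0 - d0) ^ 2 + (c1 - d1) ^ 2 - (c0 + d0 - 2 * t) ^ 2 := by
    rw [hj2]; ring
  -- |a0+b0-2t| ≤ b0-a0 and alike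
  have p1 : 0 ≤ (b0 - a0) - (a0 + b0 - 2 * t) := by linarith
  have p2 : 0 ≤ (b0 - a0) + (a0 + b0 - 2 * t) := by linarith
  have p3 : 0 ≤ (d0 - c0) - (c0 + d0 - 2 * t) := by linarith
  have p4 : 0 ≤ (d0 - c0) + (c0 + d0 - 2 * t) := by linarith
  -- key2 : sx * sx' ≤ ux * ux' (with ux = a0 - b0 of sign matching)
  have key2 : (a0 + b0 - 2 * t) * (c0 + d0 - 2 * t) ≤ (b0 - a0) * (d0 - c0) := by
    linarith [mul_nonneg p1 p4, mul_nonneg p2 p3]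
  -- (2 hi)^2 ≥ (a1 - b1)^2
  have q1 : (a1 - b1) ^ 2 ≤ (2 * hi) ^ 2 := by linarith [mul_nonneg p1 p2, e1]
  have q2 : (c1 - d1) ^ 2 ≤ (2 * hj) ^ 2 := by linarith [mul_nonneg p3 p4, e2]
  obtain ⟨q1a, q1b⟩ := abs_le_of_sq_le_sq' q1 (by linarith)
  obtain ⟨q2a, q2b⟩ := abs_le_of_sq_le_sq' q2 (by linarith)
  have key1 : -((a1 - b1) * (c1 - d1)) ≤ 4 * (hi * hj) := by
    linarith [mul_nonneg (by linarith : (0:ℝ) ≤ 2 * hi - (a1 - b1))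
        (by linarith : (0:ℝ) ≤ 2 * hj - (c1 - d1)),
      mul_nonneg (by linarith : (0:ℝ) ≤ 2 * hi + (a1 - b1))
        (by linarith : (0:ℝ) ≤ 2 * hj + (c1 - d1))]
  -- step: from the swap inequality
  have id1 : ((a0 + b0) - (c0 + d0)) ^ 2 + ((a1 + b1) - (c1 + d1)) ^ 2
      - ((a0 - b0) - (c0 - d0)) ^ 2 - ((a1 - b1) - (c1 - d1)) ^ 2
      = 4 * ((a0 - c0) * (b0 - d0) + (a1 - c1) * (b1 - d1)) := by ring
  have step : ((a1 + b1) - (c1 + d1)) ^ 2 ≤ ((a0 - b0) - (c0 - d0)) ^ 2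
      + ((a1 - b1) - (c1 - d1)) ^ 2 - ((a0 + b0) - (c0 + d0)) ^ 2 := by
    linarith [sq_nonneg ((a0 + b0) - (c0 + d0)), hsw, id1]
  have step2 : ((a0 - b0) - (c0 - d0)) ^ 2 + ((a1 - b1) - (c1 - d1)) ^ 2
      - ((a0 + b0) - (c0 + d0)) ^ 2 ≤ (2 * hi + 2 * hj) ^ 2 := by
    linarith [key1, key2, e1, e2]
  have final_sq : ((a1 + b1) - (c1 + d1)) ^ 2 ≤ (2 * hi + 2 * hj) ^ 2 := by linarith
  have := (abs_le_of_sq_le_sq' final_sq (by linarith)).2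
  linarith

/-- Any set of `2r` points in the plane admits a perfect matching whose `r`
edge-diameter disks have a common point. -/
theorem even_points_perfect_matching_tverberg
    (r : ℕ) (S : Finset (EuclideanSpace ℝ (Fin 2))) (hcard : S.card = 2 * r) :
    ∃ x : Fin (2 * r) → EuclideanSpace ℝ (Fin 2),
      Function.Injective x ∧
      Set.range x = (S : Set (EuclideanSpace ℝ (Fin 2))) ∧
      ∃ q, ∀ (i : ℕ) (h : 2 * i + 1 < 2 * r),
        q ∈ diskD (x ⟨2 * i, by omega⟩) (x ⟨2 * i + 1, h⟩) := by
  classical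
  have hfc : Fintype.card S = 2 * r := by simpa using hcard
  obtain ⟨g, hginj, hgrange, hgmono⟩ :
      ∃ g : Fin (2 * r) → EuclideanSpace ℝ (Fin 2), Function.Injective g ∧
        Set.range g = (S : Set (EuclideanSpace ℝ (Fin 2))) ∧
        Monotone (fun i => g i 0) := by
    set e := Fintype.equivFinOfCardEq hfc with he
    set g0 : Fin (2 * r) → EuclideanSpace ℝ (Fin 2) := fun i => ((e.symm i : S) :
      EuclideanSpace ℝ (Fin 2)) with hg0
    have hg0inj : Function.Injective g0 :=
      Subtype.val_injective.comp e.symm.injective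
    have hg0range : Set.range g0 = (S : Set (EuclideanSpace ℝ (Fin 2))) := by
      apply Set.eq_of_subset_of_subset
      · rintro y ⟨i, rfl⟩
        exact (e.symm i).2
      · intro y hy
        exact ⟨e ⟨y, hy⟩, by simp [hg0]⟩
    set σ := Tuple.sort (fun i => g0 i 0) with hσ
    refine ⟨fun i => g0 (σ i), hg0inj.comp σ.injective, ?_, ?_⟩
    · rw [← hg0range]
      rw [show (fun i => g0 (σ i)) = g0 ∘ σ from rfl, Set.range_comp]
      rw [σ.range_eq_univ, Set.image_univ]
    · exact Tuple.monotone_sort (fun i => g0 i 0)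
  rcases Nat.eq_zero_or_pos r with hr | hr
  · subst hr
    refine ⟨g, hginj, hgrange, 0, ?_⟩
    intro i h
    omega
  -- main case
  set t : ℝ := g ⟨r - 1, by omega⟩ 0 with ht
  set A : Fin r → EuclideanSpace ℝ (Fin 2) := fun i => g ⟨(i : ℕ), by omega⟩ with hA
  set Bg : Fin r → EuclideanSpace ℝ (Fin 2) := fun m => g ⟨r + (m : ℕ), by omega⟩ with hB
  have hL : ∀ i : Fin r, A i 0 ≤ t := by
    intro i
    refine hgmono ?_
    rw [Fin.le_def]
    show (i : ℕ) ≤ r - 1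
    omega
  have hR : ∀ m : Fin r, t ≤ Bg m 0 := by
    intro m
    refine hgmono ?_
    rw [Fin.le_def]
    show r - 1 ≤ r + (m : ℕ)
    omega
  -- maximum-weight matching
  obtain ⟨pm, -, hpmmax⟩ := Finset.exists_max_image (Finset.univ : Finset (Equiv.Perm (Fin r)))
    (fun p => ∑ k : Fin r, dist (A k) (Bg (p k)) ^ 2) ⟨1, Finset.mem_univ 1⟩
  -- swap optimality
  have hswap : ∀ i j : Fin r, i ≠ j →
      dist (A i) (Bg (pm j)) ^ 2 + dist (A j) (Bg (pm i)) ^ 2 ≤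
      dist (A i) (Bg (pm i)) ^ 2 + dist (A j) (Bg (pm j)) ^ 2 := by
    intro i j hij
    have h1 := hpmmax ((Equiv.swap i j).trans pm) (Finset.mem_univ _)
    simp only [Equiv.trans_apply] at h1
    have hre : (∑ k : Fin r, dist (A (Equiv.swap i j k)) (Bg (pm k)) ^ 2)
        = ∑ k : Fin r, dist (A k) (Bg (pm (Equiv.swap i j k))) ^ 2 := by
      refine Fintype.sum_equiv (Equiv.swap i j) _ _ (fun k => ?_)
      rw [Equiv.swap_apply_self]
    rw [← hre] at h1
    have hsub : ∑ k : Fin r,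
          (dist (A k) (Bg (pm k)) ^ 2 - dist (A (Equiv.swap i j k)) (Bg (pm k)) ^ 2)
        = ∑ k ∈ ({i, j} : Finset (Fin r)),
            (dist (A k) (Bg (pm k)) ^ 2 - dist (A (Equiv.swap i j k)) (Bg (pm k)) ^ 2) := by
      refine (Finset.sum_subset (Finset.subset_univ _) ?_).symm
      intro k _ hk
      simp only [Finset.mem_insert, Finset.mem_singleton, not_or] at hk
      rw [Equiv.swap_apply_of_ne_of_ne hk.1 hk.2]
      ring
    rw [Finset.sum_pair hij, Equiv.swap_apply_left, Equiv.swap_apply_right] at hsub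
    rw [Finset.sum_sub_distrib] at hsub
    linarith [hsub, h1]
  -- chord data
  have hrad : ∀ k : Fin r,
      0 ≤ dist (A k) (Bg (pm k)) ^ 2 / 4 - (t - (A k 0 + Bg (pm k) 0) / 2) ^ 2 := by
    intro k
    have h1 := hL k
    have h2 := hR (pm k)
    rw [dist_sq_eq]
    linarith [sq_nonneg (A k 1 - Bg (pm k) 1),
      mul_nonneg (sub_nonneg.2 h1) (sub_nonneg.2 h2)]
  set c : Fin r → ℝ := fun k => (A k 1 + Bg (pm k) 1) / 2 with hcdef
  set hh : Fin r → ℝ := fun k =>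
    Real.sqrt (dist (A k) (Bg (pm k)) ^ 2 / 4 - (t - (A k 0 + Bg (pm k) 0) / 2) ^ 2) with hhdef
  have hh0 : ∀ k, 0 ≤ hh k := fun k => Real.sqrt_nonneg _
  have hh2 : ∀ k, hh k ^ 2
      = dist (A k) (Bg (pm k)) ^ 2 / 4 - (t - (A k 0 + Bg (pm k) 0) / 2) ^ 2 :=
    fun k => Real.sq_sqrt (hrad k)
  have hh2' : ∀ k, hh k ^ 2
      = ((A k 0 - Bg (pm k) 0) ^ 2 + (A k 1 - Bg (pm k) 1) ^ 2) / 4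
        - (t - (A k 0 + Bg (pm k) 0) / 2) ^ 2 := by
    intro k
    rw [hh2 k, dist_sq_eq]
  have overlap : ∀ k l : Fin r, c k - hh k ≤ c l + hh l := by
    intro k l
    by_cases hkl : k = l
    · subst hkl
      have := hh0 k
      simp only [hcdef]
      linarith
    · have hsw := hswap k l hkl
      rw [dist_sq_eq, dist_sq_eq, dist_sq_eq, dist_sq_eq] at hsw
      have hswc : (A k 0 - A l 0) * (Bg (pm k) 0 - Bg (pm l) 0)
          + (A k 1 - A l 1) * (Bg (pm k) 1 - Bg (pm l) 1) ≤ 0 := by linarith [hsw]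
      have hco := core_overlap (A k 0) (A k 1) (Bg (pm k) 0) (Bg (pm k) 1)
        (A l 0) (A l 1) (Bg (pm l) 0) (Bg (pm l) 1) t (hh k) (hh l)
        (hL k) (hR (pm k)) (hL l) (hR (pm l)) hswc (hh0 k) (hh0 l) (hh2' k) (hh2' l)
      simp only [hcdef]
      linarith
  obtain ⟨k0, -, hk0⟩ := Finset.exists_min_image (Finset.univ : Finset (Fin r))
    (fun k => c k + hh k) ⟨⟨0, hr⟩, Finset.mem_univ _⟩
  set ys : ℝ := c k0 + hh k0 with hysdef
  have hysle : ∀ k, c k - hh k ≤ ys ∧ ys ≤ c k + hh k := by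
    intro k
    exact ⟨overlap k k0, hk0 k (Finset.mem_univ k)⟩
  set q : EuclideanSpace ℝ (Fin 2) := (WithLp.equiv 2 (Fin 2 → ℝ)).symm ![t, ys] with hq
  have hq0 : q 0 = t := rfl
  have hq1 : q 1 = ys := rfl
  -- the matching enumeration
  set x : Fin (2 * r) → EuclideanSpace ℝ (Fin 2) := fun k =>
    if hk : (k : ℕ) % 2 = 0 then A ⟨(k : ℕ) / 2, by omega⟩
    else Bg (pm ⟨(k : ℕ) / 2, by omega⟩) with hx
  have hxe : ∀ (k : Fin (2 * r)) (hk : (k : ℕ) % 2 = 0),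
      x k = A ⟨(k : ℕ) / 2, by omega⟩ := by
    intro k hk
    simp only [hx]
    exact dif_pos hk
  have hxo : ∀ (k : Fin (2 * r)) (hk : ¬ ((k : ℕ) % 2 = 0)),
      x k = Bg (pm ⟨(k : ℕ) / 2, by omega⟩) := by
    intro k hk
    simp only [hx]
    exact dif_neg hk
  have hAg : ∀ (m : ℕ) (hm : m < r), A ⟨m, hm⟩ = g ⟨m, by omega⟩ := fun m hm => rfl
  have hBg : ∀ (m : Fin r), Bg m = g ⟨r + (m : ℕ), by omega⟩ := fun m => rfl
  refine ⟨x, ?_, ?_, q, ?_⟩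
  · -- injectivity
    intro k1 k2 heq
    by_cases h1 : (k1 : ℕ) % 2 = 0 <;> by_cases h2 : (k2 : ℕ) % 2 = 0
    · rw [hxe k1 h1, hxe k2 h2, hAg, hAg] at heq
      have h3 := hginj heq
      rw [Fin.mk.injEq] at h3
      exact Fin.ext (by omega)
    · rw [hxe k1 h1, hxo k2 h2, hAg, hBg] at heq
      have h3 := hginj heq
      rw [Fin.mk.injEq] at h3
      have h4 : (k1 : ℕ) / 2 < r := by omega
      omega
    · rw [hxo k1 h1, hxe k2 h2, hBg, hAg] at heq
      have h3 := hginj heq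
      rw [Fin.mk.injEq] at h3
      have h4 : (k2 : ℕ) / 2 < r := by omega
      omega
    · rw [hxo k1 h1, hxo k2 h2, hBg, hBg] at heq
      have h3 := hginj heq
      rw [Fin.mk.injEq] at h3
      have h4 : (pm ⟨(k1 : ℕ) / 2, by omega⟩ : Fin r) = pm ⟨(k2 : ℕ) / 2, by omega⟩ :=
        Fin.ext (by omega)
      have h5 := pm.injective h4
      rw [Fin.mk.injEq] at h5
      exact Fin.ext (by omega)
  · -- range
    rw [← hgrange]
    apply Set.eq_of_subset_of_subset
    · rintro y ⟨k, rfl⟩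
      by_cases h1 : (k : ℕ) % 2 = 0
      · rw [hxe k h1, hAg]
        exact ⟨_, rfl⟩
      · rw [hxo k h1, hBg]
        exact ⟨_, rfl⟩
    · rintro y ⟨m, rfl⟩
      by_cases hm : (m : ℕ) < r
      · refine ⟨⟨2 * (m : ℕ), by omega⟩, ?_⟩
        rw [hxe ⟨2 * (m : ℕ), by omega⟩ (by show 2 * (m : ℕ) % 2 = 0; omega), hAg]
        apply congrArg
        apply Fin.ext
        show 2 * (m : ℕ) / 2 = (m : ℕ)
        omega
      · set j : Fin r := ⟨(m : ℕ) - r, by omega⟩ with hj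
        refine ⟨⟨2 * (pm.symm j : ℕ) + 1, by omega⟩, ?_⟩
        rw [hxo ⟨2 * (pm.symm j : ℕ) + 1, by omega⟩
          (by show ¬ ((2 * (pm.symm j : ℕ) + 1) % 2 = 0); omega)]
        have h6 : (⟨((2 * (pm.symm j : ℕ) + 1 : ℕ)) / 2, by omega⟩ : Fin r) = pm.symm j := by
          apply Fin.ext
          show (2 * (pm.symm j : ℕ) + 1) / 2 = (pm.symm j : ℕ)
          omega
        rw [h6, Equiv.apply_symm_apply, hBg]
        apply congrArg
        apply Fin.ext
        show r + ((m : ℕ) - r) = (m : ℕ)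
        omega
  · -- the common point
    intro i hi
    have hik : i < r := by omega
    have hx1 : x ⟨2 * i, by omega⟩ = A ⟨i, hik⟩ := by
      rw [hxe ⟨2 * i, by omega⟩ (by show 2 * i % 2 = 0; omega)]
      apply congrArg
      apply Fin.ext
      show 2 * i / 2 = i
      omega
    have hx2 : x ⟨2 * i + 1, hi⟩ = Bg (pm ⟨i, hik⟩) := by
      rw [hxo ⟨2 * i + 1, hi⟩ (by show ¬ ((2 * i + 1) % 2 = 0); omega)]
      apply congrArg
      apply congrArg
      apply Fin.ext
      show (2 * i + 1) / 2 = i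
      omega
    rw [hx1, hx2, diskD, Metric.mem_closedBall]
    set k : Fin r := ⟨i, hik⟩
    have hsq : dist q (midpoint ℝ (A k) (Bg (pm k))) ^ 2
        ≤ (dist (A k) (Bg (pm k)) / 2) ^ 2 := by
      rw [dist_sq_eq, midpoint_coord, midpoint_coord, hq0, hq1]
      have h2 := hh2' k
      have h3 := hysle k
      have h4 : (ys - c k) ^ 2 ≤ hh k ^ 2 :=
        sq_le_sq' (by linarith [h3.1]) (by linarith [h3.2])
      have h5 : dist (A k) (Bg (pm k)) ^ 2
          = (A k 0 - Bg (pm k) 0) ^ 2 + (A k 1 - Bg (pm k) 1) ^ 2 := dist_sq_eq _ _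
      have h6 : (dist (A k) (Bg (pm k)) / 2) ^ 2 = dist (A k) (Bg (pm k)) ^ 2 / 4 := by
        ring
      have h9 : c k = (A k 1 + Bg (pm k) 1) / 2 := by rw [hcdef]
      rw [h9] at h4
      rw [h6, h5]
      linarith [h4, h2]
    exact (abs_le_of_sq_le_sq' hsq (by positivity)).2
end
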